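/- arXiv:2309.15464 — 2 statements merged into one kernel-verified Lean document; each statement's English description precedes it below -/
import Mathlib

section
/- If the set M* = {p : g(ξ,ξ)(p) ≠ 0} is dense in M, then the 2-form Ω = i_ξ ω vanishes everywhere on M if and only if the twist 3-form ω = (1/2) ξ♭ ∧ dξ♭ vanishes everywhere on M. -/
open scoped BigOperators

/-- `M` is (the underlying topological space of) the
spacetime, `ξ` the covariant components of the Killing field, `ginv` the
inverse metric, `λ = -g(ξ,ξ)`, `ω = (1/2) ξ♭ ∧ dξ♭` the (continuous) twist
three-form, and `Ω = i_ξ ω`.  On `M* = {λ ≠ 0}` the identity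
`ω = -λ⁻¹ ξ♭ ∧ Ω` holds.  If `M*` is dense in `M`, then `Ω` vanishes
everywhere on `M` if and only if `ω` vanishes everywhere on `M`. -/
theorem stmt2 {ι M : Type*} [Fintype ι] [TopologicalSpace M]
    (ginv : M → ι → ι → ℝ) (ξ : M → ι → ℝ) (lam : M → ℝ)
    (hlam : ∀ p, lam p = - ∑ a, ∑ b, ginv p a b * ξ p a * ξ p b)
    (ω : M → ι → ι → ι → ℝ)
    (hωcont : ∀ a b c, Continuous fun p => ω p a b c)  -- ω is a smooth form on M
    (Ω : M → ι → ι → ℝ)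
    (hΩ : ∀ p b c, Ω p b c = ∑ m, ∑ n, ginv p m n * ξ p m * ω p n b c)  -- Ω = i_ξ ω
    (hrel : ∀ p, lam p ≠ 0 → ∀ a b c,                  -- ω = -λ⁻¹ ξ♭ ∧ Ω on M*
      ω p a b c = - (lam p)⁻¹ *
        (ξ p a * Ω p b c + ξ p b * Ω p c a + ξ p c * Ω p a b))
    (hdense : Dense {p : M | lam p ≠ 0}) :
    (∀ p, Ω p = 0) ↔ (∀ p, ω p = 0) := by
  constructor
  · intro hΩ0
    have key : ∀ a b c, ∀ p, ω p a b c = 0 := by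
      intro a b c
      have hcl : IsClosed {p : M | ω p a b c = 0} :=
        isClosed_eq (hωcont a b c) continuous_const
      have hsub : {p : M | lam p ≠ 0} ⊆ {p : M | ω p a b c = 0} := by
        intro p hp
        simp only [Set.mem_setOf_eq] at hp ⊢
        rw [hrel p hp a b c, hΩ0 p]
        simp
      have := hcl.closure_subset_iff.mpr hsub
      intro p
      exact this (hdense p)
    intro p
    funext a b c
    exact key a b c p
  · intro hω0 p
    funext b c
    rw [hΩ p b c]
    simp [hω0 p]
end

section
/- Let (Σ,h) be an n-dimensional pseudo-Riemannian manifold, u > 0 smooth, and h̄ = u^{-2} h. For any smooth 2-form Ψ, Δ_{h̄} Ψ_{ij} = u² Δ_h Ψ_{ij} + 2(u Δ_h u + (2−n)|du|²_h) Ψ_{ij} + (4−n)( u D^k u D_k Ψ_{ij} + D^k u D_i u Ψ_{kj} − D^k u D_j u Ψ_{ki} ) − 2u( D_i u (δΨ)_j − D_j u (δΨ)_i ) + 2u D^k u (dΨ)_{kij}, where Δ denotes the rough (connection) Laplacian, D the Levi-Civita derivative of h, δ the codifferential of h, and indices are raised with h. -/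
open scoped BigOperators

noncomputable section

/-- Partial derivative `∂_i f` of a function of coordinates. -/
def pd {ι : Type*} [Fintype ι] [DecidableEq ι]
    (i : ι) (f : (ι → ℝ) → ℝ) (x : ι → ℝ) : ℝ :=
  fderiv ℝ f x (Pi.single i 1)

/-- Christoffel symbols `Γ^k_{ij}` of the metric `g` with inverse `ginv`. -/
def christoffel {ι : Type*} [Fintype ι] [DecidableEq ι]
    (g ginv : (ι → ℝ) → ι → ι → ℝ) (k i j : ι) (x : ι → ℝ) : ℝ :=
  (1/2) * ∑ l, ginv x k l *
    (pd i (fun y => g y l j) x + pd j (fun y => g y l i) x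
      - pd l (fun y => g y i j) x)

/-- Levi-Civita covariant derivative `D_a Ψ_{ij}` of a two-form. -/
def covD2 {ι : Type*} [Fintype ι] [DecidableEq ι]
    (g ginv : (ι → ℝ) → ι → ι → ℝ) (Ψ : (ι → ℝ) → ι → ι → ℝ)
    (a i j : ι) (x : ι → ℝ) : ℝ :=
  pd a (fun y => Ψ y i j) x
  - ∑ k, christoffel g ginv k a i x * Ψ x k j
  - ∑ k, christoffel g ginv k a j x * Ψ x i k

/-- Levi-Civita covariant derivative `D_a T_{bij}` of a 3-covariant tensor. -/
def covDT3 {ι : Type*} [Fintype ι] [DecidableEq ι]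
    (g ginv : (ι → ℝ) → ι → ι → ℝ) (T : (ι → ℝ) → ι → ι → ι → ℝ)
    (a b i j : ι) (x : ι → ℝ) : ℝ :=
  pd a (fun y => T y b i j) x
  - ∑ k, christoffel g ginv k a b x * T x k i j
  - ∑ k, christoffel g ginv k a i x * T x b k j
  - ∑ k, christoffel g ginv k a j x * T x b i k

/-- Rough (connection) Laplacian `Δ_g Ψ_{ij} = D^a D_a Ψ_{ij}` on two-forms. -/
def roughLap2 {ι : Type*} [Fintype ι] [DecidableEq ι]
    (g ginv : (ι → ℝ) → ι → ι → ℝ) (Ψ : (ι → ℝ) → ι → ι → ℝ)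
    (i j : ι) (x : ι → ℝ) : ℝ :=
  ∑ a, ∑ b, ginv x a b *
    covDT3 g ginv (fun y b' i' j' => covD2 g ginv Ψ b' i' j' y) a b i j x

/-- Rough Laplacian `Δ_g u = D^a D_a u` on functions. -/
def lap0 {ι : Type*} [Fintype ι] [DecidableEq ι]
    (g ginv : (ι → ℝ) → ι → ι → ℝ) (u : (ι → ℝ) → ℝ) (x : ι → ℝ) : ℝ :=
  ∑ a, ∑ b, ginv x a b *
    (pd a (fun y => pd b u y) x - ∑ k, christoffel g ginv k a b x * pd k u x)

/-- Codifferential of a two-form, `(δΨ)_j = -D^i Ψ_{ij}`. -/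
def codiff2 {ι : Type*} [Fintype ι] [DecidableEq ι]
    (g ginv : (ι → ℝ) → ι → ι → ℝ) (Ψ : (ι → ℝ) → ι → ι → ℝ)
    (j : ι) (x : ι → ℝ) : ℝ :=
  - ∑ a, ∑ b, ginv x a b * covD2 g ginv Ψ b a j x

/-- Exterior derivative of an (antisymmetric) two-form. -/
def dTwo {ι : Type*} [Fintype ι] [DecidableEq ι]
    (Ψ : (ι → ℝ) → ι → ι → ℝ) (k i j : ι) (x : ι → ℝ) : ℝ :=
  pd k (fun y => Ψ y i j) x + pd i (fun y => Ψ y j k) x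
    + pd j (fun y => Ψ y k i) x

/-! ### Toolkit for `pd` -/

section Toolkit
variable {ι : Type*} [Fintype ι] [DecidableEq ι]

theorem pd_congr {f g : (ι → ℝ) → ℝ} (hfg : ∀ y, f y = g y) (i : ι) (x : ι → ℝ) :
    pd i f x = pd i g x := by
  have : f = g := funext hfg
  rw [this]

theorem pd_const (c : ℝ) (i : ι) (x : ι → ℝ) : pd i (fun _ => c) x = 0 := by
  simp [pd]

theorem pd_add {f g : (ι → ℝ) → ℝ} {x : ι → ℝ} (i : ι)
    (hf : DifferentiableAt ℝ f x) (hg : DifferentiableAt ℝ g x) :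
    pd i (fun y => f y + g y) x = pd i f x + pd i g x := by
  simp [pd, fderiv_fun_add hf hg]

theorem pd_sub {f g : (ι → ℝ) → ℝ} {x : ι → ℝ} (i : ι)
    (hf : DifferentiableAt ℝ f x) (hg : DifferentiableAt ℝ g x) :
    pd i (fun y => f y - g y) x = pd i f x - pd i g x := by
  simp [pd, fderiv_fun_sub hf hg]

theorem pd_neg {f : (ι → ℝ) → ℝ} {x : ι → ℝ} (i : ι) :
    pd i (fun y => -f y) x = - pd i f x := by
  simp [pd, fderiv_neg]

theorem pd_mul {f g : (ι → ℝ) → ℝ} {x : ι → ℝ} (i : ι)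
    (hf : DifferentiableAt ℝ f x) (hg : DifferentiableAt ℝ g x) :
    pd i (fun y => f y * g y) x = pd i f x * g x + f x * pd i g x := by
  simp [pd, fderiv_fun_mul hf hg]; ring

theorem pd_const_mul {f : (ι → ℝ) → ℝ} {x : ι → ℝ} (c : ℝ) (i : ι)
    (hf : DifferentiableAt ℝ f x) :
    pd i (fun y => c * f y) x = c * pd i f x := by
  simp [pd, fderiv_const_mul hf]

theorem pd_sum {κ : Type*} {s : Finset κ} {f : κ → (ι → ℝ) → ℝ} {x : ι → ℝ} (i : ι)
    (hf : ∀ k ∈ s, DifferentiableAt ℝ (f k) x) :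
    pd i (fun y => ∑ k ∈ s, f k y) x = ∑ k ∈ s, pd i (f k) x := by
  simp [pd, fderiv_fun_sum hf]

theorem contDiff_pd {f : (ι → ℝ) → ℝ} (hf : ContDiff ℝ (⊤ : ℕ∞) f) (i : ι) :
    ContDiff ℝ (⊤ : ℕ∞) (fun x => pd i f x) :=
  (hf.fderiv_right (by simp)).clm_apply contDiff_const

theorem pd_symm {u : (ι → ℝ) → ℝ} (hu : ContDiff ℝ (⊤ : ℕ∞) u) (a b : ι) (x : ι → ℝ) :
    pd a (fun y => pd b u y) x = pd b (fun y => pd a u y) x := by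
  have hsymm : IsSymmSndFDerivAt ℝ u x := hu.contDiffAt.isSymmSndFDerivAt (by rw [minSmoothness_of_isRCLikeNormedField]; exact WithTop.coe_le_coe.mpr (le_top : (2:ℕ∞) ≤ ⊤))
  have key : ∀ v w : ι → ℝ, fderiv ℝ (fun y => fderiv ℝ u y v) x w
      = fderiv ℝ (fderiv ℝ u) x w v := by
    intro v w
    rw [show (fun y => fderiv ℝ u y v) = fun y => (fderiv ℝ u y) v from rfl,
      fderiv_clm_apply ((hu.fderiv_right (m := 1) (WithTop.coe_le_coe.mpr le_top)).differentiable one_ne_zero).differentiableAt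
      (differentiableAt_const v)]
    simp
  unfold pd
  rw [key, key]
  exact hsymm.eq _ _

theorem pd_inv_sq {u : (ι → ℝ) → ℝ} (hu : ContDiff ℝ (⊤ : ℕ∞) u) {x : ι → ℝ} (hx : u x ≠ 0) (i : ι) :
    pd i (fun y => (u y)⁻¹ ^ 2) x = -2 * (u x)⁻¹ ^ 3 * pd i u x := by
  have h1 : HasDerivAt (fun t : ℝ => t⁻¹ ^ 2) (-2 * (u x)⁻¹ ^ 3) (u x) := by
    have := (hasDerivAt_inv hx).pow 2
    refine this.congr_deriv ?_
    norm_num; field_simp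
  have h2 : HasFDerivAt u (fderiv ℝ u x) x :=
    (hu.differentiable (by simp)).differentiableAt.hasFDerivAt
  have h4 : HasFDerivAt (fun y => (u y)⁻¹ ^ 2) ((-2 * (u x)⁻¹ ^ 3) • fderiv ℝ u x) x :=
    h1.comp_hasFDerivAt x h2
  rw [pd, h4.fderiv]
  simp [pd]

theorem pd_inv {u : (ι → ℝ) → ℝ} (hu : ContDiff ℝ (⊤ : ℕ∞) u) {x : ι → ℝ} (hx : u x ≠ 0) (i : ι) :
    pd i (fun y => (u y)⁻¹) x = -((u x)⁻¹ ^ 2) * pd i u x := by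
  have h1 : HasDerivAt (fun t : ℝ => t⁻¹) (-((u x)⁻¹ ^ 2)) (u x) := by
    have := hasDerivAt_inv hx
    refine this.congr_deriv ?_
    field_simp
  have h2 : HasFDerivAt u (fderiv ℝ u x) x :=
    (hu.differentiable (by simp)).differentiableAt.hasFDerivAt
  have h4 : HasFDerivAt (fun y => (u y)⁻¹) ((-((u x)⁻¹ ^ 2)) • fderiv ℝ u x) x :=
    h1.comp_hasFDerivAt x h2
  rw [pd, h4.fderiv]
  simp [pd]

end Toolkit
/-! ### Geometry bundle and auxiliary tensors -/

section Conformal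
variable {ι : Type*} [Fintype ι] [DecidableEq ι]

structure Geom (h hinv : (ι → ℝ) → ι → ι → ℝ) (u : (ι → ℝ) → ℝ)
    (Ψ : (ι → ℝ) → ι → ι → ℝ) : Prop where
  hsym : ∀ x a b, h x a b = h x b a
  hinvsym : ∀ x a b, hinv x a b = hinv x b a
  hinverse : ∀ x a c, (∑ b, h x a b * hinv x b c) = if a = c then 1 else 0
  hsm : ∀ a b, ContDiff ℝ (⊤ : ℕ∞) fun x => h x a b
  hinvsm : ∀ a b, ContDiff ℝ (⊤ : ℕ∞) fun x => hinv x a b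
  husm : ContDiff ℝ (⊤ : ℕ∞) u
  hupos : ∀ x, 0 < u x
  hΨanti : ∀ x i j, Ψ x i j = - Ψ x j i
  hΨsm : ∀ i j, ContDiff ℝ (⊤ : ℕ∞) fun x => Ψ x i j

/-- gradient vector `D^k u`. -/
def gradv (hinv : (ι → ℝ) → ι → ι → ℝ) (u : (ι → ℝ) → ℝ) (k : ι) (x : ι → ℝ) : ℝ :=
  ∑ l, hinv x k l * pd l u x

/-- covariant Hessian `D_a D_b u`. -/
def hessU (h hinv : (ι → ℝ) → ι → ι → ℝ) (u : (ι → ℝ) → ℝ) (a b : ι) (x : ι → ℝ) : ℝ :=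
  pd a (fun y => pd b u y) x - ∑ k, christoffel h hinv k a b x * pd k u x

/-- `G_i = D^k u Ψ_{ki}`. -/
def Gv (hinv : (ι → ℝ) → ι → ι → ℝ) (u : (ι → ℝ) → ℝ) (Ψ : (ι → ℝ) → ι → ι → ℝ)
    (i : ι) (x : ι → ℝ) : ℝ :=
  ∑ k, gradv hinv u k x * Ψ x k i

/-- `M_{bij} = u (covD2 h̄ − covD2 h) Ψ`. -/
def Mt (h hinv : (ι → ℝ) → ι → ι → ℝ) (u : (ι → ℝ) → ℝ) (Ψ : (ι → ℝ) → ι → ι → ℝ)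
    (b i j : ι) (x : ι → ℝ) : ℝ :=
  2 * pd b u x * Ψ x i j + pd i u x * Ψ x b j - pd j u x * Ψ x b i
    + h x b j * Gv hinv u Ψ i x - h x b i * Gv hinv u Ψ j x

namespace Geom

variable {h hinv : (ι → ℝ) → ι → ι → ℝ} {u : (ι → ℝ) → ℝ} {Ψ : (ι → ℝ) → ι → ι → ℝ}
variable (G : Geom h hinv u Ψ)
include G

theorem smooth_christoffel (k i j : ι) :
    ContDiff ℝ (⊤ : ℕ∞) fun x => christoffel h hinv k i j x := by
  unfold christoffel
  exact contDiff_const.mul (ContDiff.sum fun l _ => (G.hinvsm k l).mul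
    (((contDiff_pd (G.hsm l j) i).add (contDiff_pd (G.hsm l i) j)).sub
      (contDiff_pd (G.hsm i j) l)))

theorem smooth_covD2 (a i j : ι) :
    ContDiff ℝ (⊤ : ℕ∞) fun x => covD2 h hinv Ψ a i j x := by
  unfold covD2
  exact ((contDiff_pd (G.hΨsm i j) a).sub
      (ContDiff.sum fun k _ => (G.smooth_christoffel k a i).mul (G.hΨsm k j))).sub
    (ContDiff.sum fun k _ => (G.smooth_christoffel k a j).mul (G.hΨsm i k))

theorem smooth_gradv (k : ι) : ContDiff ℝ (⊤ : ℕ∞) fun x => gradv hinv u k x := by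
  unfold gradv
  exact ContDiff.sum fun l _ => (G.hinvsm k l).mul (contDiff_pd G.husm l)

theorem smooth_Gv (i : ι) : ContDiff ℝ (⊤ : ℕ∞) fun x => Gv hinv u Ψ i x := by
  unfold Gv
  exact ContDiff.sum fun k _ => (G.smooth_gradv k).mul (G.hΨsm k i)

theorem smooth_Mt (b i j : ι) : ContDiff ℝ (⊤ : ℕ∞) fun x => Mt h hinv u Ψ b i j x := by
  unfold Mt
  exact (((((contDiff_const.mul (contDiff_pd G.husm b)).mul (G.hΨsm i j)).add
      ((contDiff_pd G.husm i).mul (G.hΨsm b j))).sub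
      ((contDiff_pd G.husm j).mul (G.hΨsm b i))).add
      ((G.hsm b j).mul (G.smooth_Gv i))).sub ((G.hsm b i).mul (G.smooth_Gv j))

theorem smooth_uinv : ContDiff ℝ (⊤ : ℕ∞) fun x => (u x)⁻¹ :=
  G.husm.inv fun x => (G.hupos x).ne'

theorem hinv_h (x : ι → ℝ) (a c : ι) :
    ∑ b, hinv x a b * h x b c = if a = c then 1 else 0 := by
  have : ∑ b, hinv x a b * h x b c = ∑ b, h x c b * hinv x b a := by
    apply Finset.sum_congr rfl
    intro b _
    rw [G.hsym x b c, G.hinvsym x a b]; ring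
  rw [this, G.hinverse x c a]
  simp [eq_comm]

theorem trace_hinv_h (x : ι → ℝ) :
    ∑ a, ∑ b, hinv x a b * h x a b = (Fintype.card ι : ℝ) := by
  have : ∀ a : ι, ∑ b, hinv x a b * h x a b = 1 := by
    intro a
    have h2 := G.hinv_h x a a
    simp only [if_pos rfl] at h2
    rw [show (1:ℝ) = if True then 1 else 0 by simp, ← h2]
    exact Finset.sum_congr rfl fun b _ => by rw [G.hsym x a b]
  simp [this]

theorem hinv_antisym_zero (x : ι → ℝ) :
    ∑ a, ∑ b, hinv x a b * Ψ x a b = 0 := by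
  have key : (∑ a, ∑ b, hinv x a b * Ψ x a b)
      = - ∑ a, ∑ b, hinv x a b * Ψ x a b := by
    calc (∑ a, ∑ b, hinv x a b * Ψ x a b)
        = ∑ b, ∑ a, hinv x a b * Ψ x a b := Finset.sum_comm
      _ = ∑ a, ∑ b, hinv x b a * Ψ x b a := rfl
      _ = ∑ a, ∑ b, -(hinv x a b * Ψ x a b) := by
          refine Finset.sum_congr rfl fun a _ => Finset.sum_congr rfl fun b _ => ?_
          rw [G.hinvsym x b a, G.hΨanti x b a]; ring
      _ = - ∑ a, ∑ b, hinv x a b * Ψ x a b := by simp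
  linarith

theorem christoffel_symm (x : ι → ℝ) (k i j : ι) :
    christoffel h hinv k i j x = christoffel h hinv k j i x := by
  unfold christoffel
  congr 1
  apply Finset.sum_congr rfl
  intro l _
  have e1 : pd l (fun y => h y i j) x = pd l (fun y => h y j i) x :=
    pd_congr (fun y => G.hsym y i j) l x
  rw [e1]; ring

end Geom
end Conformal
section Compat
variable {ι : Type*} [Fintype ι] [DecidableEq ι]
namespace Geom
variable {h hinv : (ι → ℝ) → ι → ι → ℝ} {u : (ι → ℝ) → ℝ} {Ψ : (ι → ℝ) → ι → ι → ℝ}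
variable (G : Geom h hinv u Ψ)
include G

theorem dAt_h (x : ι → ℝ) (b c : ι) : DifferentiableAt ℝ (fun y => h y b c) x :=
  ((G.hsm b c).differentiable (by simp)).differentiableAt
theorem dAt_hinv (x : ι → ℝ) (b c : ι) : DifferentiableAt ℝ (fun y => hinv y b c) x :=
  ((G.hinvsm b c).differentiable (by simp)).differentiableAt
theorem dAt_uinv (x : ι → ℝ) : DifferentiableAt ℝ (fun y => (u y)⁻¹) x :=
  (G.smooth_uinv.differentiable (by simp)).differentiableAt
theorem dAt_psi (x : ι → ℝ) (b c : ι) : DifferentiableAt ℝ (fun y => Ψ y b c) x :=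
  ((G.hΨsm b c).differentiable (by simp)).differentiableAt
theorem dAt_pdu (x : ι → ℝ) (i : ι) : DifferentiableAt ℝ (fun y => pd i u y) x :=
  ((contDiff_pd G.husm i).differentiable (by simp)).differentiableAt
theorem dAt_covD2 (x : ι → ℝ) (a i j : ι) :
    DifferentiableAt ℝ (fun y => covD2 h hinv Ψ a i j y) x :=
  ((G.smooth_covD2 a i j).differentiable (by simp)).differentiableAt
theorem dAt_gradv (x : ι → ℝ) (k : ι) : DifferentiableAt ℝ (fun y => gradv hinv u k y) x :=
  ((G.smooth_gradv k).differentiable (by simp)).differentiableAt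
theorem dAt_Gv (x : ι → ℝ) (i : ι) : DifferentiableAt ℝ (fun y => Gv hinv u Ψ i y) x :=
  ((G.smooth_Gv i).differentiable (by simp)).differentiableAt
theorem dAt_Mt (x : ι → ℝ) (b i j : ι) : DifferentiableAt ℝ (fun y => Mt h hinv u Ψ b i j y) x :=
  ((G.smooth_Mt b i j).differentiable (by simp)).differentiableAt

/-- lowered Christoffel contraction: `∑_k Γ^k_{ab} h_{kc} = ½(∂_a h_{cb} + ∂_b h_{ca} - ∂_c h_{ab})`. -/
theorem christoffel_lower (x : ι → ℝ) (a b c : ι) :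
    ∑ k, christoffel h hinv k a b x * h x k c
      = (1/2) * (pd a (fun y => h y c b) x + pd b (fun y => h y c a) x
          - pd c (fun y => h y a b) x) := by
  unfold christoffel
  calc ∑ k, ((1/2) * ∑ l, hinv x k l *
        (pd a (fun y => h y l b) x + pd b (fun y => h y l a) x - pd l (fun y => h y a b) x))
          * h x k c
      = ∑ l, (1/2) * ((pd a (fun y => h y l b) x + pd b (fun y => h y l a) x
          - pd l (fun y => h y a b) x) * ∑ k, hinv x l k * h x k c) := by
        calc ∑ k, ((1/2) * ∑ l, hinv x k l *
              (pd a (fun y => h y l b) x + pd b (fun y => h y l a) x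
                - pd l (fun y => h y a b) x)) * h x k c
            = ∑ k, ∑ l, (1/2) * (hinv x k l *
              (pd a (fun y => h y l b) x + pd b (fun y => h y l a) x
                - pd l (fun y => h y a b) x) * h x k c) := by
              refine Finset.sum_congr rfl fun k _ => ?_
              rw [mul_assoc, Finset.sum_mul, Finset.mul_sum]
          _ = ∑ l, ∑ k, (1/2) * (hinv x k l *
              (pd a (fun y => h y l b) x + pd b (fun y => h y l a) x
                - pd l (fun y => h y a b) x) * h x k c) := Finset.sum_comm
          _ = ∑ l, (1/2) * ((pd a (fun y => h y l b) x + pd b (fun y => h y l a) x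
                - pd l (fun y => h y a b) x) * ∑ k, hinv x l k * h x k c) := by
              refine Finset.sum_congr rfl fun l _ => ?_
              rw [Finset.mul_sum, Finset.mul_sum]
              refine Finset.sum_congr rfl fun k _ => ?_
              rw [G.hinvsym x l k]; ring
    _ = ∑ l, (1/2) * ((pd a (fun y => h y l b) x + pd b (fun y => h y l a) x
          - pd l (fun y => h y a b) x) * if l = c then 1 else 0) := by
        refine Finset.sum_congr rfl fun l _ => ?_
        rw [G.hinv_h x l c]
    _ = (1/2) * (pd a (fun y => h y c b) x + pd b (fun y => h y c a) x
          - pd c (fun y => h y a b) x) := by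
        simp

/-- Metric compatibility: `∂_a h_{bc} = Γ^k_{ab} h_{kc} + Γ^k_{ac} h_{bk}`. -/
theorem mcompat (x : ι → ℝ) (a b c : ι) :
    pd a (fun y => h y b c) x
      = ∑ k, christoffel h hinv k a b x * h x k c
        + ∑ k, christoffel h hinv k a c x * h x b k := by
  have e2 : ∑ k, christoffel h hinv k a c x * h x b k
      = ∑ k, christoffel h hinv k a c x * h x k b :=
    Finset.sum_congr rfl fun k _ => by rw [G.hsym x b k]
  rw [G.christoffel_lower x a b c, e2, G.christoffel_lower x a c b]
  have s1 : pd b (fun y => h y c a) x = pd b (fun y => h y a c) x :=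
    pd_congr (fun y => G.hsym y c a) b x
  have s2 : pd c (fun y => h y b a) x = pd c (fun y => h y a b) x :=
    pd_congr (fun y => G.hsym y b a) c x
  have s3 : pd a (fun y => h y c b) x = pd a (fun y => h y b c) x :=
    pd_congr (fun y => G.hsym y c b) a x
  rw [s1, s2, s3]
  ring

/-- Derivative of the inverse metric (covariant constancy of `hinv`). -/
theorem dhinv (x : ι → ℝ) (a k l : ι) :
    pd a (fun y => hinv y k l) x
      = - ∑ m, christoffel h hinv k a m x * hinv x m l
        - ∑ m, christoffel h hinv l a m x * hinv x k m := by
  have step1 : ∀ c e : ι, ∑ b, (pd a (fun y => h y c b) x * hinv x b e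
      + h x c b * pd a (fun y => hinv y b e) x) = 0 := by
    intro c e
    have e1 : pd a (fun y => ∑ b, h y c b * hinv y b e) x
        = ∑ b, (pd a (fun y => h y c b) x * hinv x b e
            + h x c b * pd a (fun y => hinv y b e) x) := by
      rw [pd_sum a (fun b _ => (G.dAt_h x c b).fun_mul (G.dAt_hinv x b e))]
      exact Finset.sum_congr rfl fun b _ => pd_mul a (G.dAt_h x c b) (G.dAt_hinv x b e)
    rw [← e1, pd_congr (fun y => G.hinverse y c e) a x, pd_const]
  have collapse1 : ∀ b : ι, ∑ c, hinv x k c * h x c b = if k = b then 1 else 0 :=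
    fun b => G.hinv_h x k b
  have step2 : pd a (fun y => hinv y k l) x
      = - ∑ c, ∑ b, hinv x k c * pd a (fun y => h y c b) x * hinv x b l := by
    have e0 : ∑ c, hinv x k c * (∑ b, (pd a (fun y => h y c b) x * hinv x b l
        + h x c b * pd a (fun y => hinv y b l) x)) = 0 := by
      simp only [step1, mul_zero, Finset.sum_const_zero]
    have e1 : ∑ c, hinv x k c * (∑ b, (pd a (fun y => h y c b) x * hinv x b l
        + h x c b * pd a (fun y => hinv y b l) x))
        = (∑ c, ∑ b, hinv x k c * pd a (fun y => h y c b) x * hinv x b l)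
          + ∑ b, (∑ c, hinv x k c * h x c b) * pd a (fun y => hinv y b l) x := by
      calc ∑ c, hinv x k c * (∑ b, (pd a (fun y => h y c b) x * hinv x b l
            + h x c b * pd a (fun y => hinv y b l) x))
          = ∑ c, ∑ b, (hinv x k c * pd a (fun y => h y c b) x * hinv x b l
            + hinv x k c * (h x c b * pd a (fun y => hinv y b l) x)) := by
            refine Finset.sum_congr rfl fun c _ => ?_
            rw [Finset.mul_sum]
            exact Finset.sum_congr rfl fun b _ => by ring
        _ = (∑ c, ∑ b, hinv x k c * pd a (fun y => h y c b) x * hinv x b l)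
            + ∑ c, ∑ b, hinv x k c * (h x c b * pd a (fun y => hinv y b l) x) := by
            rw [← Finset.sum_add_distrib]
            exact Finset.sum_congr rfl fun c _ => by rw [Finset.sum_add_distrib]
        _ = (∑ c, ∑ b, hinv x k c * pd a (fun y => h y c b) x * hinv x b l)
            + ∑ b, (∑ c, hinv x k c * h x c b) * pd a (fun y => hinv y b l) x := by
            congr 1
            rw [Finset.sum_comm]
            refine Finset.sum_congr rfl fun b _ => ?_
            rw [Finset.sum_mul]
            exact Finset.sum_congr rfl fun c _ => by ring
    rw [e1] at e0
    simp only [collapse1, ite_mul, one_mul, zero_mul] at e0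
    rw [Finset.sum_ite_eq] at e0
    simp only [Finset.mem_univ, if_true] at e0
    linarith
  rw [step2]
  have expand : ∀ c b : ι, pd a (fun y => h y c b) x
      = ∑ m, christoffel h hinv m a c x * h x m b
        + ∑ m, christoffel h hinv m a b x * h x c m := fun c b => G.mcompat x a c b
  have term1 : ∑ c, ∑ b, hinv x k c * (∑ m, christoffel h hinv m a c x * h x m b) * hinv x b l
      = ∑ m, christoffel h hinv l a m x * hinv x k m := by
    calc ∑ c, ∑ b, hinv x k c * (∑ m, christoffel h hinv m a c x * h x m b) * hinv x b l
        = ∑ c, ∑ b, ∑ m, hinv x k c * christoffel h hinv m a c x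
            * (h x m b * hinv x b l) := by
          refine Finset.sum_congr rfl fun c _ => Finset.sum_congr rfl fun b _ => ?_
          rw [Finset.mul_sum, Finset.sum_mul]
          exact Finset.sum_congr rfl fun m _ => by ring
      _ = ∑ c, ∑ m, ∑ b, hinv x k c * christoffel h hinv m a c x
            * (h x m b * hinv x b l) := by
          exact Finset.sum_congr rfl fun c _ => Finset.sum_comm
      _ = ∑ c, ∑ m, hinv x k c * christoffel h hinv m a c x
            * (∑ b, h x m b * hinv x b l) := by
          refine Finset.sum_congr rfl fun c _ => Finset.sum_congr rfl fun m _ => ?_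
          rw [Finset.mul_sum]
      _ = ∑ c, ∑ m, hinv x k c * christoffel h hinv m a c x
            * (if m = l then 1 else 0) := by
          refine Finset.sum_congr rfl fun c _ => Finset.sum_congr rfl fun m _ => ?_
          rw [G.hinverse x m l]
      _ = ∑ c, hinv x k c * christoffel h hinv l a c x := by
          refine Finset.sum_congr rfl fun c _ => ?_
          simp
      _ = ∑ m, christoffel h hinv l a m x * hinv x k m :=
          Finset.sum_congr rfl fun c _ => by ring
  have term2 : ∑ c, ∑ b, hinv x k c * (∑ m, christoffel h hinv m a b x * h x c m) * hinv x b l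
      = ∑ m, christoffel h hinv k a m x * hinv x m l := by
    calc ∑ c, ∑ b, hinv x k c * (∑ m, christoffel h hinv m a b x * h x c m) * hinv x b l
        = ∑ c, ∑ b, ∑ m, hinv x k c * h x c m
            * (christoffel h hinv m a b x * hinv x b l) := by
          refine Finset.sum_congr rfl fun c _ => Finset.sum_congr rfl fun b _ => ?_
          rw [Finset.mul_sum, Finset.sum_mul]
          exact Finset.sum_congr rfl fun m _ => by ring
      _ = ∑ b, ∑ c, ∑ m, hinv x k c * h x c m
            * (christoffel h hinv m a b x * hinv x b l) := Finset.sum_comm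
      _ = ∑ b, ∑ m, ∑ c, hinv x k c * h x c m
            * (christoffel h hinv m a b x * hinv x b l) := by
          exact Finset.sum_congr rfl fun b _ => Finset.sum_comm
      _ = ∑ b, ∑ m, (∑ c, hinv x k c * h x c m)
            * (christoffel h hinv m a b x * hinv x b l) := by
          refine Finset.sum_congr rfl fun b _ => Finset.sum_congr rfl fun m _ => ?_
          rw [Finset.sum_mul]
      _ = ∑ b, christoffel h hinv k a b x * hinv x b l := by
          refine Finset.sum_congr rfl fun b _ => ?_
          simp only [collapse1, ite_mul, one_mul, zero_mul]
          rw [Finset.sum_ite_eq]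
          simp
  have final : ∑ c, ∑ b, hinv x k c * pd a (fun y => h y c b) x * hinv x b l
      = (∑ m, christoffel h hinv l a m x * hinv x k m)
        + ∑ m, christoffel h hinv k a m x * hinv x m l := by
    rw [← term1, ← term2, ← Finset.sum_add_distrib]
    refine Finset.sum_congr rfl fun c _ => ?_
    rw [← Finset.sum_add_distrib]
    refine Finset.sum_congr rfl fun b _ => ?_
    rw [expand c b]
    ring
  rw [final]
  ring
end Geom
end Compat
section SymLemmas
variable {ι : Type*} [Fintype ι] [DecidableEq ι]
namespace Geom
variable {h hinv : (ι → ℝ) → ι → ι → ℝ} {u : (ι → ℝ) → ℝ} {Ψ : (ι → ℝ) → ι → ι → ℝ}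
variable (G : Geom h hinv u Ψ)
include G

theorem hessU_symm (x : ι → ℝ) (a b : ι) :
    hessU h hinv u a b x = hessU h hinv u b a x := by
  unfold hessU
  rw [pd_symm G.husm a b x]
  congr 1
  exact Finset.sum_congr rfl fun k _ => by rw [G.christoffel_symm x k a b]

theorem covD2_antisym (x : ι → ℝ) (a i j : ι) :
    covD2 h hinv Ψ a i j x = - covD2 h hinv Ψ a j i x := by
  unfold covD2
  have e1 : pd a (fun y => Ψ y i j) x = - pd a (fun y => Ψ y j i) x := by
    rw [pd_congr (fun y => G.hΨanti y i j) a x, pd_neg]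
  have e2 : ∑ k, christoffel h hinv k a i x * Ψ x k j
      = - ∑ k, christoffel h hinv k a i x * Ψ x j k := by
    rw [← Finset.sum_neg_distrib]
    exact Finset.sum_congr rfl fun k _ => by rw [G.hΨanti x k j]; ring
  have e3 : ∑ k, christoffel h hinv k a j x * Ψ x i k
      = - ∑ k, christoffel h hinv k a j x * Ψ x k i := by
    rw [← Finset.sum_neg_distrib]
    exact Finset.sum_congr rfl fun k _ => by rw [G.hΨanti x i k]; ring
  rw [e1, e2, e3]
  ring

theorem dTwo_eq (x : ι → ℝ) (k i j : ι) :
    dTwo Ψ k i j x = covD2 h hinv Ψ k i j x + covD2 h hinv Ψ i j k x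
      + covD2 h hinv Ψ j k i x := by
  unfold dTwo covD2
  have z1 : ∑ m, christoffel h hinv m k i x * Ψ x m j
      + ∑ m, christoffel h hinv m i k x * Ψ x j m = 0 := by
    rw [← Finset.sum_add_distrib]
    apply Finset.sum_eq_zero
    intro m _
    rw [G.christoffel_symm x m i k, G.hΨanti x j m]; ring
  have z2 : ∑ m, christoffel h hinv m k j x * Ψ x i m
      + ∑ m, christoffel h hinv m j k x * Ψ x m i = 0 := by
    rw [← Finset.sum_add_distrib]
    apply Finset.sum_eq_zero
    intro m _
    rw [G.christoffel_symm x m j k, G.hΨanti x i m]; ring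
  have z3 : ∑ m, christoffel h hinv m i j x * Ψ x m k
      + ∑ m, christoffel h hinv m j i x * Ψ x k m = 0 := by
    rw [← Finset.sum_add_distrib]
    apply Finset.sum_eq_zero
    intro m _
    rw [G.christoffel_symm x m j i, G.hΨanti x k m]; ring
  linarith

end Geom
end SymLemmas
section ConfChristoffel
variable {ι : Type*} [Fintype ι] [DecidableEq ι]
namespace Geom
variable {h hinv : (ι → ℝ) → ι → ι → ℝ} {u : (ι → ℝ) → ℝ} {Ψ : (ι → ℝ) → ι → ι → ℝ}
variable (G : Geom h hinv u Ψ)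
include G

theorem smooth_uinv_sq : ContDiff ℝ (⊤ : ℕ∞) fun y => (u y)⁻¹ ^ 2 := G.smooth_uinv.pow 2

theorem dAt_uinv_sq (x : ι → ℝ) : DifferentiableAt ℝ (fun y => (u y)⁻¹ ^ 2) x :=
  (G.smooth_uinv_sq.differentiable (by simp)).differentiableAt

theorem christoffel_conf (x : ι → ℝ) (k i j : ι) :
    christoffel (fun y a b => (u y)⁻¹ ^ 2 * h y a b)
        (fun y a b => (u y) ^ 2 * hinv y a b) k i j x
      = christoffel h hinv k i j x
        - (u x)⁻¹ * ((if k = i then 1 else 0) * pd j u x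
            + (if k = j then 1 else 0) * pd i u x
            - h x i j * gradv hinv u k x) := by
  have hne : u x ≠ 0 := (G.hupos x).ne'
  have hB : ∀ (c a b : ι), pd c (fun y => (u y)⁻¹ ^ 2 * h y a b) x
      = (u x)⁻¹ ^ 2 * pd c (fun y => h y a b) x
        + (-2 * (u x)⁻¹ ^ 3 * pd c u x) * h x a b := by
    intro c a b
    rw [pd_mul c (G.dAt_uinv_sq x) (G.dAt_h x a b), pd_inv_sq G.husm hne c]
    ring
  simp only [christoffel, hB]
  have split : ∑ l, (u x) ^ 2 * hinv x k l *
        ((u x)⁻¹ ^ 2 * pd i (fun y => h y l j) x + (-2 * (u x)⁻¹ ^ 3 * pd i u x) * h x l j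
          + ((u x)⁻¹ ^ 2 * pd j (fun y => h y l i) x + (-2 * (u x)⁻¹ ^ 3 * pd j u x) * h x l i)
          - ((u x)⁻¹ ^ 2 * pd l (fun y => h y i j) x + (-2 * (u x)⁻¹ ^ 3 * pd l u x) * h x i j))
      = ∑ l, (hinv x k l * (pd i (fun y => h y l j) x + pd j (fun y => h y l i) x
          - pd l (fun y => h y i j) x)
        + (-2 * (u x)⁻¹) * (pd i u x * (hinv x k l * h x l j)
            + pd j u x * (hinv x k l * h x l i)
            - h x i j * (hinv x k l * pd l u x))) := by
    refine Finset.sum_congr rfl fun l _ => ?_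
    field_simp
    ring
  rw [split, Finset.sum_add_distrib]
  have c1 : ∑ l, (-2 * (u x)⁻¹) * (pd i u x * (hinv x k l * h x l j)
      + pd j u x * (hinv x k l * h x l i) - h x i j * (hinv x k l * pd l u x))
      = (-2 * (u x)⁻¹) * (pd i u x * (if k = j then 1 else 0)
          + pd j u x * (if k = i then 1 else 0) - h x i j * gradv hinv u k x) := by
    rw [← Finset.mul_sum]
    congr 1
    have e1 : ∑ l, (pd i u x * (hinv x k l * h x l j)
        + pd j u x * (hinv x k l * h x l i) - h x i j * (hinv x k l * pd l u x))
        = pd i u x * (∑ l, hinv x k l * h x l j)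
          + pd j u x * (∑ l, hinv x k l * h x l i)
          - h x i j * (∑ l, hinv x k l * pd l u x) := by
      rw [Finset.mul_sum, Finset.mul_sum, Finset.mul_sum, ← Finset.sum_add_distrib,
        ← Finset.sum_sub_distrib]
    rw [e1, G.hinv_h x k j, G.hinv_h x k i]
    rfl
  rw [c1]
  ring
end Geom
end ConfChristoffel
section ConfCovD
variable {ι : Type*} [Fintype ι] [DecidableEq ι]
namespace Geom
variable {h hinv : (ι → ℝ) → ι → ι → ℝ} {u : (ι → ℝ) → ℝ} {Ψ : (ι → ℝ) → ι → ι → ℝ}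
variable (G : Geom h hinv u Ψ)
include G

theorem contractDelta (x : ι → ℝ) (p q : ι) (S : ι → ℝ) :
    ∑ k, ((if k = p then 1 else 0) * pd q u x + (if k = q then 1 else 0) * pd p u x
        - h x p q * gradv hinv u k x) * S k
      = pd q u x * S p + pd p u x * S q - h x p q * ∑ k, gradv hinv u k x * S k := by
  have e : ∀ k : ι, ((if k = p then 1 else 0) * pd q u x + (if k = q then 1 else 0) * pd p u x
        - h x p q * gradv hinv u k x) * S k
      = (if k = p then 1 else 0) * (pd q u x * S k)
        + (if k = q then 1 else 0) * (pd p u x * S k)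
        - h x p q * (gradv hinv u k x * S k) := fun k => by ring
  simp only [e]
  rw [Finset.sum_sub_distrib, Finset.sum_add_distrib, ← Finset.mul_sum]
  simp [Finset.sum_ite_eq]

/-- conformal change of a Γ-contraction. -/
theorem gammaContract (x : ι → ℝ) (p q : ι) (S : ι → ℝ) :
    ∑ k, christoffel (fun y a b => (u y)⁻¹ ^ 2 * h y a b)
        (fun y a b => (u y) ^ 2 * hinv y a b) k p q x * S k
      = ∑ k, christoffel h hinv k p q x * S k
        - (u x)⁻¹ * (pd q u x * S p + pd p u x * S q
            - h x p q * ∑ k, gradv hinv u k x * S k) := by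
  calc ∑ k, christoffel (fun y a b => (u y)⁻¹ ^ 2 * h y a b)
        (fun y a b => (u y) ^ 2 * hinv y a b) k p q x * S k
      = ∑ k, (christoffel h hinv k p q x * S k
          - (u x)⁻¹ * (((if k = p then 1 else 0) * pd q u x
            + (if k = q then 1 else 0) * pd p u x
            - h x p q * gradv hinv u k x) * S k)) := by
        refine Finset.sum_congr rfl fun k _ => ?_
        rw [G.christoffel_conf x k p q]; ring
    _ = ∑ k, christoffel h hinv k p q x * S k
        - (u x)⁻¹ * ∑ k, ((if k = p then 1 else 0) * pd q u x
            + (if k = q then 1 else 0) * pd p u x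
            - h x p q * gradv hinv u k x) * S k := by
        rw [Finset.sum_sub_distrib, ← Finset.mul_sum]
    _ = _ := by rw [G.contractDelta x p q S]

theorem covD2_conf (x : ι → ℝ) (b i j : ι) :
    covD2 (fun y a b => (u y)⁻¹ ^ 2 * h y a b)
        (fun y a b => (u y) ^ 2 * hinv y a b) Ψ b i j x
      = covD2 h hinv Ψ b i j x + (u x)⁻¹ * Mt h hinv u Ψ b i j x := by
  simp only [covD2]
  rw [G.gammaContract x b i (fun k => Ψ x k j),
      G.gammaContract x b j (fun k => Ψ x i k)]
  have e1 : ∑ k, gradv hinv u k x * Ψ x i k = - Gv hinv u Ψ i x := by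
    unfold Gv
    rw [← Finset.sum_neg_distrib]
    exact Finset.sum_congr rfl fun k _ => by rw [G.hΨanti x i k]; ring
  have e2 : (∑ k, gradv hinv u k x * Ψ x k j) = Gv hinv u Ψ j x := rfl
  unfold Mt
  rw [e1, e2]
  have e3 : Ψ x i b = - Ψ x b i := G.hΨanti x i b
  rw [e3]
  ring

theorem covDT3_conf (T : (ι → ℝ) → ι → ι → ι → ℝ) (x : ι → ℝ) (a b i j : ι) :
    covDT3 (fun y a b => (u y)⁻¹ ^ 2 * h y a b)
        (fun y a b => (u y) ^ 2 * hinv y a b) T a b i j x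
      = covDT3 h hinv T a b i j x
        + (u x)⁻¹ * ((pd b u x * T x a i j + pd a u x * T x b i j
            - h x a b * ∑ k, gradv hinv u k x * T x k i j)
          + (pd i u x * T x b a j + pd a u x * T x b i j
            - h x a i * ∑ k, gradv hinv u k x * T x b k j)
          + (pd j u x * T x b i a + pd a u x * T x b i j
            - h x a j * ∑ k, gradv hinv u k x * T x b i k)) := by
  simp only [covDT3]
  rw [G.gammaContract x a b (fun k => T x k i j),
      G.gammaContract x a i (fun k => T x b k j),
      G.gammaContract x a j (fun k => T x b i k)]
  ring

end Geom
end ConfCovD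
section Leibniz
variable {ι : Type*} [Fintype ι] [DecidableEq ι]
namespace Geom
variable {h hinv : (ι → ℝ) → ι → ι → ℝ} {u : (ι → ℝ) → ℝ} {Ψ : (ι → ℝ) → ι → ι → ℝ}
variable (G : Geom h hinv u Ψ)
include G

/-- P1 : `D_a (2 D_{b}u Ψ_{ij})`. -/
theorem covDT3_P1 (x : ι → ℝ) (a b i j : ι) :
    covDT3 h hinv (fun y b' i' j' => 2 * pd b' u y * Ψ y i' j') a b i j x
      = 2 * (hessU h hinv u a b x * Ψ x i j
          + pd b u x * covD2 h hinv Ψ a i j x) := by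
  simp only [covDT3]
  have e0 : pd a (fun y => 2 * pd b u y * Ψ y i j) x
      = 2 * pd a (fun y => pd b u y) x * Ψ x i j
        + 2 * pd b u x * pd a (fun y => Ψ y i j) x := by
    rw [pd_mul a ((G.dAt_pdu x b).const_mul 2) (G.dAt_psi x i j),
      pd_const_mul 2 a (G.dAt_pdu x b)]
  rw [e0]
  have s1 : ∑ k, christoffel h hinv k a b x * (2 * pd k u x * Ψ x i j)
      = 2 * (∑ k, christoffel h hinv k a b x * pd k u x) * Ψ x i j := by
    rw [mul_assoc, Finset.sum_mul, Finset.mul_sum]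
    exact Finset.sum_congr rfl fun k _ => by ring
  have s2 : ∑ k, christoffel h hinv k a i x * (2 * pd b u x * Ψ x k j)
      = 2 * pd b u x * ∑ k, christoffel h hinv k a i x * Ψ x k j := by
    rw [Finset.mul_sum]
    exact Finset.sum_congr rfl fun k _ => by ring
  have s3 : ∑ k, christoffel h hinv k a j x * (2 * pd b u x * Ψ x i k)
      = 2 * pd b u x * ∑ k, christoffel h hinv k a j x * Ψ x i k := by
    rw [Finset.mul_sum]
    exact Finset.sum_congr rfl fun k _ => by ring
  rw [s1, s2, s3]
  unfold hessU covD2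
  ring

/-- P2 : `D_a (D_{i}u Ψ_{bj})`. -/
theorem covDT3_P2 (x : ι → ℝ) (a b i j : ι) :
    covDT3 h hinv (fun y b' i' j' => pd i' u y * Ψ y b' j') a b i j x
      = hessU h hinv u a i x * Ψ x b j
        + pd i u x * covD2 h hinv Ψ a b j x := by
  simp only [covDT3]
  rw [pd_mul a (G.dAt_pdu x i) (G.dAt_psi x b j)]
  have s1 : ∑ k, christoffel h hinv k a b x * (pd i u x * Ψ x k j)
      = pd i u x * ∑ k, christoffel h hinv k a b x * Ψ x k j := by
    rw [Finset.mul_sum]; exact Finset.sum_congr rfl fun k _ => by ring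
  have s2 : ∑ k, christoffel h hinv k a i x * (pd k u x * Ψ x b j)
      = (∑ k, christoffel h hinv k a i x * pd k u x) * Ψ x b j := by
    rw [Finset.sum_mul]; exact Finset.sum_congr rfl fun k _ => by ring
  have s3 : ∑ k, christoffel h hinv k a j x * (pd i u x * Ψ x b k)
      = pd i u x * ∑ k, christoffel h hinv k a j x * Ψ x b k := by
    rw [Finset.mul_sum]; exact Finset.sum_congr rfl fun k _ => by ring
  rw [s1, s2, s3]
  unfold hessU covD2
  ring

/-- P3 : `D_a (D_{j}u Ψ_{bi})`. -/
theorem covDT3_P3 (x : ι → ℝ) (a b i j : ι) :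
    covDT3 h hinv (fun y b' i' j' => pd j' u y * Ψ y b' i') a b i j x
      = hessU h hinv u a j x * Ψ x b i
        + pd j u x * covD2 h hinv Ψ a b i x := by
  simp only [covDT3]
  rw [pd_mul a (G.dAt_pdu x j) (G.dAt_psi x b i)]
  have s1 : ∑ k, christoffel h hinv k a b x * (pd j u x * Ψ x k i)
      = pd j u x * ∑ k, christoffel h hinv k a b x * Ψ x k i := by
    rw [Finset.mul_sum]; exact Finset.sum_congr rfl fun k _ => by ring
  have s2 : ∑ k, christoffel h hinv k a i x * (pd j u x * Ψ x b k)
      = pd j u x * ∑ k, christoffel h hinv k a i x * Ψ x b k := by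
    rw [Finset.mul_sum]; exact Finset.sum_congr rfl fun k _ => by ring
  have s3 : ∑ k, christoffel h hinv k a j x * (pd k u x * Ψ x b i)
      = (∑ k, christoffel h hinv k a j x * pd k u x) * Ψ x b i := by
    rw [Finset.sum_mul]; exact Finset.sum_congr rfl fun k _ => by ring
  rw [s1, s2, s3]
  unfold hessU covD2
  ring

/-- P4 : `D_a (h_{bj} G_i)`. -/
theorem covDT3_P4 (x : ι → ℝ) (a b i j : ι) :
    covDT3 h hinv (fun y b' i' j' => h y b' j' * Gv hinv u Ψ i' y) a b i j x
      = h x b j * (pd a (fun y => Gv hinv u Ψ i y) x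
          - ∑ m, christoffel h hinv m a i x * Gv hinv u Ψ m x) := by
  simp only [covDT3]
  rw [pd_mul a (G.dAt_h x b j) (G.dAt_Gv x i)]
  have s1 : ∑ k, christoffel h hinv k a b x * (h x k j * Gv hinv u Ψ i x)
      = (∑ k, christoffel h hinv k a b x * h x k j) * Gv hinv u Ψ i x := by
    rw [Finset.sum_mul]; exact Finset.sum_congr rfl fun k _ => by ring
  have s2 : ∑ k, christoffel h hinv k a i x * (h x b j * Gv hinv u Ψ k x)
      = h x b j * ∑ k, christoffel h hinv k a i x * Gv hinv u Ψ k x := by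
    rw [Finset.mul_sum]; exact Finset.sum_congr rfl fun k _ => by ring
  have s3 : ∑ k, christoffel h hinv k a j x * (h x b k * Gv hinv u Ψ i x)
      = (∑ k, christoffel h hinv k a j x * h x b k) * Gv hinv u Ψ i x := by
    rw [Finset.sum_mul]; exact Finset.sum_congr rfl fun k _ => by ring
  rw [s1, s2, s3, G.mcompat x a b j]
  ring

/-- P5 : `D_a (h_{bi} G_j)`. -/
theorem covDT3_P5 (x : ι → ℝ) (a b i j : ι) :
    covDT3 h hinv (fun y b' i' j' => h y b' i' * Gv hinv u Ψ j' y) a b i j x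
      = h x b i * (pd a (fun y => Gv hinv u Ψ j y) x
          - ∑ m, christoffel h hinv m a j x * Gv hinv u Ψ m x) := by
  simp only [covDT3]
  rw [pd_mul a (G.dAt_h x b i) (G.dAt_Gv x j)]
  have s1 : ∑ k, christoffel h hinv k a b x * (h x k i * Gv hinv u Ψ j x)
      = (∑ k, christoffel h hinv k a b x * h x k i) * Gv hinv u Ψ j x := by
    rw [Finset.sum_mul]; exact Finset.sum_congr rfl fun k _ => by ring
  have s2 : ∑ k, christoffel h hinv k a i x * (h x b k * Gv hinv u Ψ j x)
      = (∑ k, christoffel h hinv k a i x * h x b k) * Gv hinv u Ψ j x := by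
    rw [Finset.sum_mul]; exact Finset.sum_congr rfl fun k _ => by ring
  have s3 : ∑ k, christoffel h hinv k a j x * (h x b i * Gv hinv u Ψ k x)
      = h x b i * ∑ k, christoffel h hinv k a j x * Gv hinv u Ψ k x := by
    rw [Finset.mul_sum]; exact Finset.sum_congr rfl fun k _ => by ring
  rw [s1, s2, s3, G.mcompat x a b i]
  ring

end Geom
end Leibniz
section DG
variable {ι : Type*} [Fintype ι] [DecidableEq ι]

theorem sum3_cycle {f : ι → ι → ι → ℝ} :
    ∑ k, ∑ l, ∑ m, f k l m = ∑ m, ∑ l, ∑ k, f k l m := by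
  calc ∑ k, ∑ l, ∑ m, f k l m
      = ∑ l, ∑ k, ∑ m, f k l m := Finset.sum_comm
    _ = ∑ l, ∑ m, ∑ k, f k l m := Finset.sum_congr rfl fun l _ => Finset.sum_comm
    _ = ∑ m, ∑ l, ∑ k, f k l m := Finset.sum_comm

theorem sum3_swap23 {f : ι → ι → ι → ℝ} :
    ∑ k, ∑ l, ∑ m, f k l m = ∑ k, ∑ m, ∑ l, f k l m :=
  Finset.sum_congr rfl fun k _ => Finset.sum_comm

namespace Geom
variable {h hinv : (ι → ℝ) → ι → ι → ℝ} {u : (ι → ℝ) → ℝ} {Ψ : (ι → ℝ) → ι → ι → ℝ}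
variable (G : Geom h hinv u Ψ)
include G

theorem covD1G (x : ι → ℝ) (a i : ι) :
    pd a (fun y => Gv hinv u Ψ i y) x
      = ∑ k, ∑ l, hinv x k l * (hessU h hinv u a l x * Ψ x k i
          + pd l u x * covD2 h hinv Ψ a k i x)
        + ∑ m, christoffel h hinv m a i x * Gv hinv u Ψ m x := by
  have e1 : ∀ k : ι, pd a (fun y => gradv hinv u k y) x
      = ∑ l, ((- ∑ m, christoffel h hinv k a m x * hinv x m l
          - ∑ m, christoffel h hinv l a m x * hinv x k m) * pd l u x
          + hinv x k l * pd a (fun y => pd l u y) x) := by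
    intro k
    have : (fun y => gradv hinv u k y) = fun y => ∑ l, hinv y k l * pd l u y := rfl
    rw [this, pd_sum a (fun l _ => (G.dAt_hinv x k l).fun_mul (G.dAt_pdu x l))]
    refine Finset.sum_congr rfl fun l _ => ?_
    rw [pd_mul a (G.dAt_hinv x k l) (G.dAt_pdu x l), G.dhinv x a k l]
  have e0 : pd a (fun y => Gv hinv u Ψ i y) x
      = ∑ k, ((∑ l, ((- ∑ m, christoffel h hinv k a m x * hinv x m l
            - ∑ m, christoffel h hinv l a m x * hinv x k m) * pd l u x
            + hinv x k l * pd a (fun y => pd l u y) x)) * Ψ x k i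
          + gradv hinv u k x * pd a (fun y => Ψ y k i) x) := by
    have : (fun y => Gv hinv u Ψ i y) = fun y => ∑ k, gradv hinv u k y * Ψ y k i := rfl
    rw [this, pd_sum a (fun k _ => (G.dAt_gradv x k).fun_mul (G.dAt_psi x k i))]
    refine Finset.sum_congr rfl fun k _ => ?_
    rw [pd_mul a (G.dAt_gradv x k) (G.dAt_psi x k i), e1 k]
  rw [e0]
  -- canonical four triple sums for the LHS
  have main : ∑ k, ((∑ l, ((- ∑ m, christoffel h hinv k a m x * hinv x m l
            - ∑ m, christoffel h hinv l a m x * hinv x k m) * pd l u x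
            + hinv x k l * pd a (fun y => pd l u y) x)) * Ψ x k i
          + gradv hinv u k x * pd a (fun y => Ψ y k i) x)
      = - (∑ k, ∑ l, ∑ m, christoffel h hinv k a m x * hinv x m l * pd l u x * Ψ x k i)
        - (∑ k, ∑ l, ∑ m, christoffel h hinv l a m x * hinv x k m * pd l u x * Ψ x k i)
        + (∑ k, ∑ l, hinv x k l * pd a (fun y => pd l u y) x * Ψ x k i)
        + (∑ k, ∑ l, hinv x k l * pd l u x * pd a (fun y => Ψ y k i) x) := by
    calc ∑ k, ((∑ l, ((- ∑ m, christoffel h hinv k a m x * hinv x m l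
            - ∑ m, christoffel h hinv l a m x * hinv x k m) * pd l u x
            + hinv x k l * pd a (fun y => pd l u y) x)) * Ψ x k i
          + gradv hinv u k x * pd a (fun y => Ψ y k i) x)
        = ∑ k, ∑ l, (- (∑ m, christoffel h hinv k a m x * hinv x m l * pd l u x * Ψ x k i)
            - (∑ m, christoffel h hinv l a m x * hinv x k m * pd l u x * Ψ x k i)
            + hinv x k l * pd a (fun y => pd l u y) x * Ψ x k i
            + hinv x k l * pd l u x * pd a (fun y => Ψ y k i) x) := by
          refine Finset.sum_congr rfl fun k _ => ?_
          rw [Finset.sum_mul]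
          have g1 : gradv hinv u k x * pd a (fun y => Ψ y k i) x
              = ∑ l, hinv x k l * pd l u x * pd a (fun y => Ψ y k i) x := by
            unfold gradv
            rw [Finset.sum_mul]
          rw [g1, ← Finset.sum_add_distrib]
          refine Finset.sum_congr rfl fun l _ => ?_
          have a1 : (∑ m, christoffel h hinv k a m x * hinv x m l) * pd l u x * Ψ x k i
              = ∑ m, christoffel h hinv k a m x * hinv x m l * pd l u x * Ψ x k i := by
            rw [Finset.sum_mul, Finset.sum_mul]
          have a2 : (∑ m, christoffel h hinv l a m x * hinv x k m) * pd l u x * Ψ x k i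
              = ∑ m, christoffel h hinv l a m x * hinv x k m * pd l u x * Ψ x k i := by
            rw [Finset.sum_mul, Finset.sum_mul]
          linear_combination - a1 - a2
      _ = _ := by
          simp only [Finset.sum_add_distrib, Finset.sum_sub_distrib, Finset.sum_neg_distrib]
  rw [main]
  -- canonical five sums for the covariant RHS
  have rhs1 : ∑ k, ∑ l, hinv x k l * (hessU h hinv u a l x * Ψ x k i
          + pd l u x * covD2 h hinv Ψ a k i x)
      = (∑ k, ∑ l, hinv x k l * pd a (fun y => pd l u y) x * Ψ x k i)
        - (∑ k, ∑ l, ∑ m, hinv x k l * christoffel h hinv m a l x * pd m u x * Ψ x k i)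
        + (∑ k, ∑ l, hinv x k l * pd l u x * pd a (fun y => Ψ y k i) x)
        - (∑ k, ∑ l, ∑ m, hinv x k l * pd l u x * christoffel h hinv m a k x * Ψ x m i)
        - (∑ k, ∑ l, ∑ m, hinv x k l * pd l u x * christoffel h hinv m a i x * Ψ x k m) := by
    calc ∑ k, ∑ l, hinv x k l * (hessU h hinv u a l x * Ψ x k i
          + pd l u x * covD2 h hinv Ψ a k i x)
        = ∑ k, ∑ l, (hinv x k l * pd a (fun y => pd l u y) x * Ψ x k i
            - (∑ m, hinv x k l * christoffel h hinv m a l x * pd m u x * Ψ x k i)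
            + hinv x k l * pd l u x * pd a (fun y => Ψ y k i) x
            - (∑ m, hinv x k l * pd l u x * christoffel h hinv m a k x * Ψ x m i)
            - (∑ m, hinv x k l * pd l u x * christoffel h hinv m a i x * Ψ x k m)) := by
          refine Finset.sum_congr rfl fun k _ => Finset.sum_congr rfl fun l _ => ?_
          unfold hessU covD2
          have b1 : hinv x k l * (∑ m, christoffel h hinv m a l x * pd m u x) * Ψ x k i
              = ∑ m, hinv x k l * christoffel h hinv m a l x * pd m u x * Ψ x k i := by
            rw [Finset.mul_sum, Finset.sum_mul]
            exact Finset.sum_congr rfl fun m _ => by ring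
          have b2 : hinv x k l * pd l u x * (∑ m, christoffel h hinv m a k x * Ψ x m i)
              = ∑ m, hinv x k l * pd l u x * christoffel h hinv m a k x * Ψ x m i := by
            rw [Finset.mul_sum]
            exact Finset.sum_congr rfl fun m _ => by ring
          have b3 : hinv x k l * pd l u x * (∑ m, christoffel h hinv m a i x * Ψ x k m)
              = ∑ m, hinv x k l * pd l u x * christoffel h hinv m a i x * Ψ x k m := by
            rw [Finset.mul_sum]
            exact Finset.sum_congr rfl fun m _ => by ring
          linear_combination - b1 - b2 - b3
      _ = _ := by
          simp only [Finset.sum_add_distrib, Finset.sum_sub_distrib, Finset.sum_neg_distrib]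
  have rhs2 : ∑ m, christoffel h hinv m a i x * Gv hinv u Ψ m x
      = ∑ k, ∑ l, ∑ m, hinv x k l * pd l u x * christoffel h hinv m a i x * Ψ x k m := by
    calc ∑ m, christoffel h hinv m a i x * Gv hinv u Ψ m x
        = ∑ m, ∑ k, ∑ l, hinv x k l * pd l u x * christoffel h hinv m a i x * Ψ x k m := by
          refine Finset.sum_congr rfl fun m _ => ?_
          unfold Gv gradv
          rw [Finset.mul_sum]
          refine Finset.sum_congr rfl fun k _ => ?_
          rw [show christoffel h hinv m a i x * ((∑ l, hinv x k l * pd l u x) * Ψ x k m)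
              = (∑ l, hinv x k l * pd l u x) * (christoffel h hinv m a i x * Ψ x k m) from by
            ring, Finset.sum_mul]
          exact Finset.sum_congr rfl fun l _ => by ring
      _ = ∑ k, ∑ m, ∑ l, hinv x k l * pd l u x * christoffel h hinv m a i x * Ψ x k m :=
          Finset.sum_comm
      _ = ∑ k, ∑ l, ∑ m, hinv x k l * pd l u x * christoffel h hinv m a i x * Ψ x k m :=
          Finset.sum_congr rfl fun k _ => Finset.sum_comm
  -- the two relabelings
  have sw1 : ∑ k, ∑ l, ∑ m, christoffel h hinv k a m x * hinv x m l * pd l u x * Ψ x k i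
      = ∑ k, ∑ l, ∑ m, hinv x k l * pd l u x * christoffel h hinv m a k x * Ψ x m i := by
    calc ∑ k, ∑ l, ∑ m, christoffel h hinv k a m x * hinv x m l * pd l u x * Ψ x k i
        = ∑ m, ∑ l, ∑ k, christoffel h hinv k a m x * hinv x m l * pd l u x * Ψ x k i :=
          sum3_cycle
      _ = ∑ k, ∑ l, ∑ m, hinv x k l * pd l u x * christoffel h hinv m a k x * Ψ x m i := by
          refine Finset.sum_congr rfl fun k _ => Finset.sum_congr rfl fun l _ =>
            Finset.sum_congr rfl fun m _ => ?_
          ring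
  have sw2 : ∑ k, ∑ l, ∑ m, christoffel h hinv l a m x * hinv x k m * pd l u x * Ψ x k i
      = ∑ k, ∑ l, ∑ m, hinv x k l * christoffel h hinv m a l x * pd m u x * Ψ x k i := by
    calc ∑ k, ∑ l, ∑ m, christoffel h hinv l a m x * hinv x k m * pd l u x * Ψ x k i
        = ∑ k, ∑ m, ∑ l, christoffel h hinv l a m x * hinv x k m * pd l u x * Ψ x k i :=
          sum3_swap23
      _ = ∑ k, ∑ l, ∑ m, hinv x k l * christoffel h hinv m a l x * pd m u x * Ψ x k i := by
          refine Finset.sum_congr rfl fun k _ => Finset.sum_congr rfl fun l _ =>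
            Finset.sum_congr rfl fun m _ => ?_
          ring
  rw [rhs1, rhs2, sw1, sw2]
  ring

end Geom
end DG
section CovDT3C
variable {ι : Type*} [Fintype ι] [DecidableEq ι]
namespace Geom
variable {h hinv : (ι → ℝ) → ι → ι → ℝ} {u : (ι → ℝ) → ℝ} {Ψ : (ι → ℝ) → ι → ι → ℝ}
variable (G : Geom h hinv u Ψ)
include G

/-- `D_a M_{bij}` fully evaluated. -/
theorem covDT3_Mt (x : ι → ℝ) (a b i j : ι) :
    covDT3 h hinv (fun y b' i' j' => Mt h hinv u Ψ b' i' j' y) a b i j x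
      = 2 * (hessU h hinv u a b x * Ψ x i j + pd b u x * covD2 h hinv Ψ a i j x)
        + (hessU h hinv u a i x * Ψ x b j + pd i u x * covD2 h hinv Ψ a b j x)
        - (hessU h hinv u a j x * Ψ x b i + pd j u x * covD2 h hinv Ψ a b i x)
        + h x b j * (∑ k, ∑ l, hinv x k l * (hessU h hinv u a l x * Ψ x k i
            + pd l u x * covD2 h hinv Ψ a k i x))
        - h x b i * (∑ k, ∑ l, hinv x k l * (hessU h hinv u a l x * Ψ x k j
            + pd l u x * covD2 h hinv Ψ a k j x)) := by
  have d1 : ∀ b' i' j' : ι, DifferentiableAt ℝ (fun y => 2 * pd b' u y * Ψ y i' j') x :=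
    fun b' i' j' => ((G.dAt_pdu x b').const_mul 2).mul (G.dAt_psi x i' j')
  have d2 : ∀ b' i' j' : ι, DifferentiableAt ℝ (fun y => pd i' u y * Ψ y b' j') x :=
    fun b' i' j' => (G.dAt_pdu x i').mul (G.dAt_psi x b' j')
  have d3 : ∀ b' i' j' : ι, DifferentiableAt ℝ (fun y => pd j' u y * Ψ y b' i') x :=
    fun b' i' j' => (G.dAt_pdu x j').mul (G.dAt_psi x b' i')
  have d4 : ∀ b' i' j' : ι, DifferentiableAt ℝ (fun y => h y b' j' * Gv hinv u Ψ i' y) x :=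
    fun b' i' j' => (G.dAt_h x b' j').mul (G.dAt_Gv x i')
  have d5 : ∀ b' i' j' : ι, DifferentiableAt ℝ (fun y => h y b' i' * Gv hinv u Ψ j' y) x :=
    fun b' i' j' => (G.dAt_h x b' i').mul (G.dAt_Gv x j')
  -- linearity of covDT3
  have lin : covDT3 h hinv (fun y b' i' j' => Mt h hinv u Ψ b' i' j' y) a b i j x
      = covDT3 h hinv (fun y b' i' j' => 2 * pd b' u y * Ψ y i' j') a b i j x
        + covDT3 h hinv (fun y b' i' j' => pd i' u y * Ψ y b' j') a b i j x
        - covDT3 h hinv (fun y b' i' j' => pd j' u y * Ψ y b' i') a b i j x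
        + covDT3 h hinv (fun y b' i' j' => h y b' j' * Gv hinv u Ψ i' y) a b i j x
        - covDT3 h hinv (fun y b' i' j' => h y b' i' * Gv hinv u Ψ j' y) a b i j x := by
    simp only [covDT3, Mt]
    have epd : pd a (fun y => 2 * pd b u y * Ψ y i j + pd i u y * Ψ y b j
          - pd j u y * Ψ y b i + h y b j * Gv hinv u Ψ i y
          - h y b i * Gv hinv u Ψ j y) x
        = pd a (fun y => 2 * pd b u y * Ψ y i j) x
          + pd a (fun y => pd i u y * Ψ y b j) x
          - pd a (fun y => pd j u y * Ψ y b i) x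
          + pd a (fun y => h y b j * Gv hinv u Ψ i y) x
          - pd a (fun y => h y b i * Gv hinv u Ψ j y) x := by
      rw [pd_sub a ((((d1 b i j).fun_add (d2 b i j)).fun_sub (d3 b i j)).fun_add (d4 b i j)) (d5 b i j),
        pd_add a (((d1 b i j).fun_add (d2 b i j)).fun_sub (d3 b i j)) (d4 b i j),
        pd_sub a ((d1 b i j).fun_add (d2 b i j)) (d3 b i j),
        pd_add a (d1 b i j) (d2 b i j)]
    rw [epd]
    simp only [mul_add, mul_sub, Finset.sum_add_distrib, Finset.sum_sub_distrib]
    ring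
  rw [lin, G.covDT3_P1 x a b i j, G.covDT3_P2 x a b i j, G.covDT3_P3 x a b i j,
    G.covDT3_P4 x a b i j, G.covDT3_P5 x a b i j,
    show pd a (fun y => Gv hinv u Ψ i y) x
        = ∑ k, ∑ l, hinv x k l * (hessU h hinv u a l x * Ψ x k i
            + pd l u x * covD2 h hinv Ψ a k i x)
          + ∑ m, christoffel h hinv m a i x * Gv hinv u Ψ m x from G.covD1G x a i,
    show pd a (fun y => Gv hinv u Ψ j y) x
        = ∑ k, ∑ l, hinv x k l * (hessU h hinv u a l x * Ψ x k j
            + pd l u x * covD2 h hinv Ψ a k j x)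
          + ∑ m, christoffel h hinv m a j x * Gv hinv u Ψ m x from G.covD1G x a j]
  ring

/-- `D_a (u⁻¹ M_{bij})`. -/
theorem covDT3_C (x : ι → ℝ) (a b i j : ι) :
    covDT3 h hinv (fun y b' i' j' => (u y)⁻¹ * Mt h hinv u Ψ b' i' j' y) a b i j x
      = - (u x)⁻¹ ^ 2 * pd a u x * Mt h hinv u Ψ b i j x
        + (u x)⁻¹ * covDT3 h hinv (fun y b' i' j' => Mt h hinv u Ψ b' i' j' y) a b i j x := by
  simp only [covDT3]
  rw [pd_mul a (G.dAt_uinv x) (G.dAt_Mt x b i j), pd_inv G.husm (G.hupos x).ne' a]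
  have s : ∀ (p q : ι) (F : ι → ι → ι → ℝ),
      ∑ k, christoffel h hinv k p q x * ((u x)⁻¹ * F b i j) = 0 ∨ True := fun _ _ _ => Or.inr trivial
  have s1 : ∀ (p q : ι) (F : ι → ℝ), ∑ k, christoffel h hinv k p q x * ((u x)⁻¹ * F k)
      = (u x)⁻¹ * ∑ k, christoffel h hinv k p q x * F k := by
    intro p q F
    rw [Finset.mul_sum]
    exact Finset.sum_congr rfl fun k _ => by ring
  rw [s1 a b (fun k => Mt h hinv u Ψ k i j x), s1 a i (fun k => Mt h hinv u Ψ b k j x),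
    s1 a j (fun k => Mt h hinv u Ψ b i k x)]
  ring

end Geom
end CovDT3C
section Contractions
variable {ι : Type*} [Fintype ι] [DecidableEq ι]
namespace Geom
variable {h hinv : (ι → ℝ) → ι → ι → ℝ} {u : (ι → ℝ) → ℝ} {Ψ : (ι → ℝ) → ι → ι → ℝ}
variable (G : Geom h hinv u Ψ)
include G

theorem swapHinv (x : ι → ℝ) (F : ι → ι → ℝ) :
    ∑ a, ∑ b, hinv x a b * F a b = ∑ a, ∑ b, hinv x a b * F b a := by
  calc ∑ a, ∑ b, hinv x a b * F a b
      = ∑ b, ∑ a, hinv x a b * F a b := Finset.sum_comm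
    _ = ∑ a, ∑ b, hinv x b a * F b a := rfl
    _ = ∑ a, ∑ b, hinv x a b * F b a := by
        exact Finset.sum_congr rfl fun a _ => Finset.sum_congr rfl fun b _ => by
          rw [G.hinvsym x b a]

theorem dC1 (x : ι → ℝ) (p : ι) (F : ι → ℝ) :
    ∑ a, ∑ b, hinv x a b * (h x b p * F a) = F p := by
  calc ∑ a, ∑ b, hinv x a b * (h x b p * F a)
      = ∑ a, (∑ b, hinv x a b * h x b p) * F a := by
        refine Finset.sum_congr rfl fun a _ => ?_
        rw [Finset.sum_mul]
        exact Finset.sum_congr rfl fun b _ => by ring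
    _ = ∑ a, (if a = p then 1 else 0) * F a := by
        refine Finset.sum_congr rfl fun a _ => ?_
        rw [G.hinv_h x a p]
    _ = F p := by simp

theorem dC2 (x : ι → ℝ) (p : ι) (F : ι → ℝ) :
    ∑ a, ∑ b, hinv x a b * (h x a p * F b) = F p := by
  rw [G.swapHinv x (fun a b => h x a p * F b)]
  exact G.dC1 x p F

theorem tC (x : ι → ℝ) (c : ℝ) :
    ∑ a, ∑ b, hinv x a b * (h x a b * c) = (Fintype.card ι : ℝ) * c := by
  calc ∑ a, ∑ b, hinv x a b * (h x a b * c)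
      = (∑ a, ∑ b, hinv x a b * h x a b) * c := by
        rw [Finset.sum_mul]
        refine Finset.sum_congr rfl fun a _ => ?_
        rw [Finset.sum_mul]
        exact Finset.sum_congr rfl fun b _ => by ring
    _ = (Fintype.card ι : ℝ) * c := by rw [G.trace_hinv_h x]

theorem cG (x : ι → ℝ) (F : ι → ℝ) :
    ∑ a, ∑ b, hinv x a b * (pd b u x * F a) = ∑ a, gradv hinv u a x * F a := by
  refine Finset.sum_congr rfl fun a _ => ?_
  unfold gradv
  rw [Finset.sum_mul]
  exact Finset.sum_congr rfl fun b _ => by ring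

theorem cG' (x : ι → ℝ) (F : ι → ℝ) :
    ∑ a, ∑ b, hinv x a b * (pd a u x * F b) = ∑ a, gradv hinv u a x * F a := by
  rw [G.swapHinv x (fun a b => pd a u x * F b)]
  exact G.cG x F

theorem gh (x : ι → ℝ) (p : ι) :
    ∑ k, gradv hinv u k x * h x k p = pd p u x := by
  calc ∑ k, gradv hinv u k x * h x k p
      = ∑ k, ∑ l, hinv x k l * pd l u x * h x k p := by
        refine Finset.sum_congr rfl fun k _ => ?_
        unfold gradv
        rw [Finset.sum_mul]
    _ = ∑ l, (∑ k, hinv x l k * h x k p) * pd l u x := by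
        rw [Finset.sum_comm]
        refine Finset.sum_congr rfl fun l _ => ?_
        rw [Finset.sum_mul]
        refine Finset.sum_congr rfl fun k _ => ?_
        rw [G.hinvsym x l k]; ring
    _ = ∑ l, (if l = p then 1 else 0) * pd l u x := by
        refine Finset.sum_congr rfl fun l _ => ?_
        rw [G.hinv_h x l p]
    _ = pd p u x := by simp

theorem gPsiNeg (x : ι → ℝ) (p : ι) :
    ∑ k, gradv hinv u k x * Ψ x p k = - Gv hinv u Ψ p x := by
  unfold Gv
  rw [← Finset.sum_neg_distrib]
  exact Finset.sum_congr rfl fun k _ => by rw [G.hΨanti x p k]; ring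

theorem gG0 (x : ι → ℝ) :
    ∑ k, gradv hinv u k x * Gv hinv u Ψ k x = 0 := by
  have key : (∑ k, ∑ m, gradv hinv u k x * (gradv hinv u m x * Ψ x m k))
      = - ∑ k, ∑ m, gradv hinv u k x * (gradv hinv u m x * Ψ x m k) := by
    calc (∑ k, ∑ m, gradv hinv u k x * (gradv hinv u m x * Ψ x m k))
        = ∑ m, ∑ k, gradv hinv u k x * (gradv hinv u m x * Ψ x m k) := Finset.sum_comm
      _ = ∑ k, ∑ m, gradv hinv u m x * (gradv hinv u k x * Ψ x k m) := rfl
      _ = ∑ k, ∑ m, -(gradv hinv u k x * (gradv hinv u m x * Ψ x m k)) := by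
          refine Finset.sum_congr rfl fun k _ => Finset.sum_congr rfl fun m _ => ?_
          rw [G.hΨanti x k m]; ring
      _ = - ∑ k, ∑ m, gradv hinv u k x * (gradv hinv u m x * Ψ x m k) := by simp
  have e0 : ∑ k, gradv hinv u k x * Gv hinv u Ψ k x
      = ∑ k, ∑ m, gradv hinv u k x * (gradv hinv u m x * Ψ x m k) := by
    refine Finset.sum_congr rfl fun k _ => ?_
    unfold Gv
    rw [Finset.mul_sum]
  rw [e0]
  linarith

theorem gw (x : ι → ℝ) :
    ∑ k, gradv hinv u k x * pd k u x
      = ∑ a, ∑ b, hinv x a b * pd a u x * pd b u x := by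
  calc ∑ k, gradv hinv u k x * pd k u x
      = ∑ k, ∑ l, hinv x k l * pd l u x * pd k u x := by
        refine Finset.sum_congr rfl fun k _ => ?_
        unfold gradv
        rw [Finset.sum_mul]
    _ = ∑ a, ∑ b, hinv x a b * pd a u x * pd b u x := by
        refine Finset.sum_congr rfl fun a _ => Finset.sum_congr rfl fun b _ => by ring

end Geom
end Contractions
section MtEvals
variable {ι : Type*} [Fintype ι] [DecidableEq ι]
namespace Geom
variable {h hinv : (ι → ℝ) → ι → ι → ℝ} {u : (ι → ℝ) → ℝ} {Ψ : (ι → ℝ) → ι → ι → ℝ}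
variable (G : Geom h hinv u Ψ)
include G

theorem mtE2 (x : ι → ℝ) (i j : ι) :
    ∑ k, gradv hinv u k x * Mt h hinv u Ψ k i j x
      = 2 * (∑ a, ∑ b, hinv x a b * pd a u x * pd b u x) * Ψ x i j := by
  have step : ∑ k, gradv hinv u k x * Mt h hinv u Ψ k i j x
      = ∑ k, (2 * Ψ x i j * (gradv hinv u k x * pd k u x)
          + pd i u x * (gradv hinv u k x * Ψ x k j)
          - pd j u x * (gradv hinv u k x * Ψ x k i)
          + Gv hinv u Ψ i x * (gradv hinv u k x * h x k j)
          - Gv hinv u Ψ j x * (gradv hinv u k x * h x k i)) := by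
    refine Finset.sum_congr rfl fun k _ => ?_
    unfold Mt
    ring
  rw [step]
  simp only [Finset.sum_add_distrib, Finset.sum_sub_distrib, ← Finset.mul_sum]
  rw [G.gw x, G.gh x j, G.gh x i,
    show (∑ k, gradv hinv u k x * Ψ x k j) = Gv hinv u Ψ j x from rfl,
    show (∑ k, gradv hinv u k x * Ψ x k i) = Gv hinv u Ψ i x from rfl]
  ring

theorem mtE1 (x : ι → ℝ) (i j : ι) :
    ∑ a, ∑ b, hinv x a b * (pd a u x * Mt h hinv u Ψ b i j x)
      = 2 * (∑ a, ∑ b, hinv x a b * pd a u x * pd b u x) * Ψ x i j := by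
  rw [G.cG' x (fun b => Mt h hinv u Ψ b i j x)]
  exact G.mtE2 x i j

theorem mtE3 (x : ι → ℝ) (j : ι) :
    ∑ a, ∑ b, hinv x a b * Mt h hinv u Ψ a b j x
      = (4 - (Fintype.card ι : ℝ)) * Gv hinv u Ψ j x := by
  have step : ∑ a, ∑ b, hinv x a b * Mt h hinv u Ψ a b j x
      = ∑ a, ∑ b, (2 * (hinv x a b * (pd a u x * Ψ x b j))
          + hinv x a b * (pd b u x * Ψ x a j)
          - pd j u x * (hinv x a b * Ψ x a b)
          + hinv x a b * (h x a j * Gv hinv u Ψ b x)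
          - hinv x a b * (h x a b * Gv hinv u Ψ j x)) := by
    refine Finset.sum_congr rfl fun a _ => Finset.sum_congr rfl fun b _ => ?_
    unfold Mt
    ring
  rw [step]
  simp only [Finset.sum_add_distrib, Finset.sum_sub_distrib, ← Finset.mul_sum]
  rw [G.cG' x (fun b => Ψ x b j), G.cG x (fun a => Ψ x a j), G.hinv_antisym_zero x,
    G.dC2 x j (fun b => Gv hinv u Ψ b x), G.tC x (Gv hinv u Ψ j x),
    show (∑ a, gradv hinv u a x * Ψ x a j) = Gv hinv u Ψ j x from rfl]
  ring

theorem mtE4 (x : ι → ℝ) (i : ι) :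
    ∑ a, ∑ b, hinv x a b * Mt h hinv u Ψ a i b x
      = ((Fintype.card ι : ℝ) - 4) * Gv hinv u Ψ i x := by
  have step : ∑ a, ∑ b, hinv x a b * Mt h hinv u Ψ a i b x
      = ∑ a, ∑ b, (2 * (hinv x a b * (pd a u x * Ψ x i b))
          + pd i u x * (hinv x a b * Ψ x a b)
          - hinv x a b * (pd b u x * Ψ x a i)
          + hinv x a b * (h x a b * Gv hinv u Ψ i x)
          - hinv x a b * (h x a i * Gv hinv u Ψ b x)) := by
    refine Finset.sum_congr rfl fun a _ => Finset.sum_congr rfl fun b _ => ?_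
    unfold Mt
    ring
  rw [step]
  simp only [Finset.sum_add_distrib, Finset.sum_sub_distrib, ← Finset.mul_sum]
  rw [G.cG' x (fun b => Ψ x i b), G.cG x (fun a => Ψ x a i), G.hinv_antisym_zero x,
    G.dC2 x i (fun b => Gv hinv u Ψ b x), G.tC x (Gv hinv u Ψ i x),
    G.gPsiNeg x i,
    show (∑ a, gradv hinv u a x * Ψ x a i) = Gv hinv u Ψ i x from rfl]
  ring

theorem mtE5 (x : ι → ℝ) (i j : ι) :
    ∑ k, gradv hinv u k x * Mt h hinv u Ψ i k j x
      = (∑ a, ∑ b, hinv x a b * pd a u x * pd b u x) * Ψ x i j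
        + pd i u x * Gv hinv u Ψ j x + pd j u x * Gv hinv u Ψ i x := by
  have step : ∑ k, gradv hinv u k x * Mt h hinv u Ψ i k j x
      = ∑ k, (2 * pd i u x * (gradv hinv u k x * Ψ x k j)
          + Ψ x i j * (gradv hinv u k x * pd k u x)
          - pd j u x * (gradv hinv u k x * Ψ x i k)
          + h x i j * (gradv hinv u k x * Gv hinv u Ψ k x)
          - Gv hinv u Ψ j x * (gradv hinv u k x * h x i k)) := by
    refine Finset.sum_congr rfl fun k _ => ?_
    unfold Mt
    ring
  rw [step]
  simp only [Finset.sum_add_distrib, Finset.sum_sub_distrib, ← Finset.mul_sum]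
  have hik : (∑ k, gradv hinv u k x * h x i k) = pd i u x := by
    rw [show (fun k => gradv hinv u k x * h x i k) = fun k => gradv hinv u k x * h x k i
        from funext fun k => by rw [G.hsym x i k]]
    exact G.gh x i
  rw [G.gw x, G.gG0 x, G.gPsiNeg x i, hik,
    show (∑ k, gradv hinv u k x * Ψ x k j) = Gv hinv u Ψ j x from rfl]
  ring

theorem mtE6 (x : ι → ℝ) (i j : ι) :
    ∑ k, gradv hinv u k x * Mt h hinv u Ψ j i k x
      = (∑ a, ∑ b, hinv x a b * pd a u x * pd b u x) * Ψ x i j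
        - pd j u x * Gv hinv u Ψ i x - pd i u x * Gv hinv u Ψ j x := by
  have step : ∑ k, gradv hinv u k x * Mt h hinv u Ψ j i k x
      = ∑ k, (2 * pd j u x * (gradv hinv u k x * Ψ x i k)
          + pd i u x * (gradv hinv u k x * Ψ x j k)
          - Ψ x j i * (gradv hinv u k x * pd k u x)
          + Gv hinv u Ψ i x * (gradv hinv u k x * h x j k)
          - h x j i * (gradv hinv u k x * Gv hinv u Ψ k x)) := by
    refine Finset.sum_congr rfl fun k _ => ?_
    unfold Mt
    ring
  rw [step]
  simp only [Finset.sum_add_distrib, Finset.sum_sub_distrib, ← Finset.mul_sum]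
  have hjk : (∑ k, gradv hinv u k x * h x j k) = pd j u x := by
    rw [show (fun k => gradv hinv u k x * h x j k) = fun k => gradv hinv u k x * h x k j
        from funext fun k => by rw [G.hsym x j k]]
    exact G.gh x j
  rw [G.gw x, G.gG0 x, G.gPsiNeg x i, G.gPsiNeg x j, hjk, G.hΨanti x j i]
  ring

end Geom
end MtEvals
section T2
variable {ι : Type*} [Fintype ι] [DecidableEq ι]
namespace Geom
variable {h hinv : (ι → ℝ) → ι → ι → ℝ} {u : (ι → ℝ) → ℝ} {Ψ : (ι → ℝ) → ι → ι → ℝ}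
variable (G : Geom h hinv u Ψ)
include G

theorem gForm (x : ι → ℝ) (F : ι → ℝ) :
    ∑ k, gradv hinv u k x * F k = ∑ k, ∑ l, hinv x k l * pd l u x * F k := by
  refine Finset.sum_congr rfl fun k _ => ?_
  unfold gradv
  rw [Finset.sum_mul]

theorem sdS3 (x : ι → ℝ) (i j : ι) :
    ∑ a, ∑ b, hinv x a b * (pd b u x * covD2 h hinv Ψ a i j x)
      = ∑ k, ∑ l, hinv x k l * pd l u x * covD2 h hinv Ψ k i j x := by
  exact Finset.sum_congr rfl fun a _ => Finset.sum_congr rfl fun b _ => by ring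

theorem XSwap (x : ι → ℝ) (p q : ι) :
    ∑ k, ∑ l, hinv x k l * (hessU h hinv u p l x * Ψ x k q)
      = ∑ a, ∑ b, hinv x a b * (hessU h hinv u a p x * Ψ x b q) := by
  calc ∑ k, ∑ l, hinv x k l * (hessU h hinv u p l x * Ψ x k q)
      = ∑ l, ∑ k, hinv x k l * (hessU h hinv u p l x * Ψ x k q) := Finset.sum_comm
    _ = ∑ a, ∑ b, hinv x a b * (hessU h hinv u a p x * Ψ x b q) := by
        refine Finset.sum_congr rfl fun a _ => Finset.sum_congr rfl fun b _ => ?_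
        rw [G.hinvsym x b a, G.hessU_symm x p a]

theorem DGsplit (x : ι → ℝ) (p q : ι) :
    ∑ k, ∑ l, hinv x k l * (hessU h hinv u p l x * Ψ x k q
        + pd l u x * covD2 h hinv Ψ p k q x)
      = ∑ a, ∑ b, hinv x a b * (hessU h hinv u a p x * Ψ x b q)
        + ∑ k, ∑ l, hinv x k l * pd l u x * covD2 h hinv Ψ p k q x := by
  rw [← G.XSwap x p q, ← Finset.sum_add_distrib]
  refine Finset.sum_congr rfl fun k _ => ?_
  rw [← Finset.sum_add_distrib]
  refine Finset.sum_congr rfl fun l _ => ?_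
  ring

theorem lapEq (x : ι → ℝ) :
    ∑ a, ∑ b, hinv x a b * hessU h hinv u a b x = lap0 h hinv u x := rfl

theorem T2eval (x : ι → ℝ) (i j : ι) :
    ∑ a, ∑ b, hinv x a b * covDT3 h hinv
        (fun y b' i' j' => (u y)⁻¹ * Mt h hinv u Ψ b' i' j' y) a b i j x
      = - (u x)⁻¹ ^ 2 * (2 * (∑ a, ∑ b, hinv x a b * pd a u x * pd b u x) * Ψ x i j)
        + (u x)⁻¹ * (2 * lap0 h hinv u x * Ψ x i j
            + 2 * ∑ k, ∑ l, hinv x k l * pd l u x * covD2 h hinv Ψ k i j x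
            + pd i u x * ∑ a, ∑ b, hinv x a b * covD2 h hinv Ψ a b j x
            - pd j u x * ∑ a, ∑ b, hinv x a b * covD2 h hinv Ψ a b i x
            + ∑ k, ∑ l, hinv x k l * pd l u x * covD2 h hinv Ψ j k i x
            - ∑ k, ∑ l, hinv x k l * pd l u x * covD2 h hinv Ψ i k j x) := by
  have step : ∑ a, ∑ b, hinv x a b * covDT3 h hinv
        (fun y b' i' j' => (u y)⁻¹ * Mt h hinv u Ψ b' i' j' y) a b i j x
      = ∑ a, ∑ b, ((- (u x)⁻¹ ^ 2) * (hinv x a b * (pd a u x * Mt h hinv u Ψ b i j x))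
          + ((u x)⁻¹ * (2 * Ψ x i j)) * (hinv x a b * hessU h hinv u a b x)
          + ((u x)⁻¹ * 2) * (hinv x a b * (pd b u x * covD2 h hinv Ψ a i j x))
          + (u x)⁻¹ * (hinv x a b * (hessU h hinv u a i x * Ψ x b j))
          + ((u x)⁻¹ * pd i u x) * (hinv x a b * covD2 h hinv Ψ a b j x)
          - (u x)⁻¹ * (hinv x a b * (hessU h hinv u a j x * Ψ x b i))
          - ((u x)⁻¹ * pd j u x) * (hinv x a b * covD2 h hinv Ψ a b i x)
          + (u x)⁻¹ * (hinv x a b * (h x b j * (∑ k, ∑ l, hinv x k l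
              * (hessU h hinv u a l x * Ψ x k i
                + pd l u x * covD2 h hinv Ψ a k i x))))
          - (u x)⁻¹ * (hinv x a b * (h x b i * (∑ k, ∑ l, hinv x k l
              * (hessU h hinv u a l x * Ψ x k j
                + pd l u x * covD2 h hinv Ψ a k j x))))) := by
    refine Finset.sum_congr rfl fun a _ => Finset.sum_congr rfl fun b _ => ?_
    rw [G.covDT3_C x a b i j, G.covDT3_Mt x a b i j]
    ring
  rw [step]
  simp only [Finset.sum_add_distrib, Finset.sum_sub_distrib, ← Finset.mul_sum]
  rw [G.mtE1 x i j, G.lapEq x, G.sdS3 x i j,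
    G.dC1 x j (fun a => ∑ k, ∑ l, hinv x k l * (hessU h hinv u a l x * Ψ x k i
        + pd l u x * covD2 h hinv Ψ a k i x)),
    G.dC1 x i (fun a => ∑ k, ∑ l, hinv x k l * (hessU h hinv u a l x * Ψ x k j
        + pd l u x * covD2 h hinv Ψ a k j x)),
    G.DGsplit x j i, G.DGsplit x i j]
  ring

theorem covDT3_split (x : ι → ℝ) (a b i j : ι) :
    covDT3 h hinv (fun y b' i' j' => covD2 (fun y a b => (u y)⁻¹ ^ 2 * h y a b)
        (fun y a b => (u y) ^ 2 * hinv y a b) Ψ b' i' j' y) a b i j x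
      = covDT3 h hinv (fun y b' i' j' => covD2 h hinv Ψ b' i' j' y) a b i j x
        + covDT3 h hinv (fun y b' i' j' => (u y)⁻¹ * Mt h hinv u Ψ b' i' j' y) a b i j x := by
  have fam : (fun y (b' : ι) (i' : ι) (j' : ι) => covD2 (fun y a b => (u y)⁻¹ ^ 2 * h y a b)
        (fun y a b => (u y) ^ 2 * hinv y a b) Ψ b' i' j' y)
      = fun y b' i' j' => covD2 h hinv Ψ b' i' j' y
          + (u y)⁻¹ * Mt h hinv u Ψ b' i' j' y := by
    funext y b' i' j'
    exact G.covD2_conf y b' i' j'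
  rw [fam]
  simp only [covDT3]
  have dC : ∀ b' i' j' : ι, DifferentiableAt ℝ
      (fun y => (u y)⁻¹ * Mt h hinv u Ψ b' i' j' y) x :=
    fun b' i' j' => (G.dAt_uinv x).mul (G.dAt_Mt x b' i' j')
  rw [pd_add a (G.dAt_covD2 x b i j) (dC b i j)]
  simp only [mul_add, Finset.sum_add_distrib]
  ring

end Geom
end T2
section T3
variable {ι : Type*} [Fintype ι] [DecidableEq ι]
namespace Geom
variable {h hinv : (ι → ℝ) → ι → ι → ℝ} {u : (ι → ℝ) → ℝ} {Ψ : (ι → ℝ) → ι → ι → ℝ}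
variable (G : Geom h hinv u Ψ)
include G

theorem T3eval (x : ι → ℝ) (i j : ι) :
    ∑ a, ∑ b, hinv x a b * ((pd b u x * (covD2 h hinv Ψ a i j x + (u x)⁻¹ * Mt h hinv u Ψ a i j x)
          + pd a u x * (covD2 h hinv Ψ b i j x + (u x)⁻¹ * Mt h hinv u Ψ b i j x)
          - h x a b * ∑ k, gradv hinv u k x * (covD2 h hinv Ψ k i j x + (u x)⁻¹ * Mt h hinv u Ψ k i j x))
        + (pd i u x * (covD2 h hinv Ψ b a j x + (u x)⁻¹ * Mt h hinv u Ψ b a j x)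
          + pd a u x * (covD2 h hinv Ψ b i j x + (u x)⁻¹ * Mt h hinv u Ψ b i j x)
          - h x a i * ∑ k, gradv hinv u k x * (covD2 h hinv Ψ b k j x + (u x)⁻¹ * Mt h hinv u Ψ b k j x))
        + (pd j u x * (covD2 h hinv Ψ b i a x + (u x)⁻¹ * Mt h hinv u Ψ b i a x)
          + pd a u x * (covD2 h hinv Ψ b i j x + (u x)⁻¹ * Mt h hinv u Ψ b i j x)
          - h x a j * ∑ k, gradv hinv u k x * (covD2 h hinv Ψ b i k x + (u x)⁻¹ * Mt h hinv u Ψ b i k x)))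
      = (4 - (Fintype.card ι : ℝ)) * (∑ k, ∑ l, hinv x k l * pd l u x * covD2 h hinv Ψ k i j x)
        + pd i u x * (∑ a, ∑ b, hinv x a b * covD2 h hinv Ψ a b j x)
        - pd j u x * (∑ a, ∑ b, hinv x a b * covD2 h hinv Ψ a b i x)
        + (∑ k, ∑ l, hinv x k l * pd l u x * covD2 h hinv Ψ j k i x)
        - (∑ k, ∑ l, hinv x k l * pd l u x * covD2 h hinv Ψ i k j x)
        + (u x)⁻¹ * ((6 - 2 * (Fintype.card ι : ℝ))
              * (∑ a, ∑ b, hinv x a b * pd a u x * pd b u x) * Ψ x i j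
            + (4 - (Fintype.card ι : ℝ)) * (pd i u x * Gv hinv u Ψ j x
                - pd j u x * Gv hinv u Ψ i x)) := by
  have inner : ∀ F1 F2 : ι → ℝ, (∑ k, gradv hinv u k x * (F1 k + (u x)⁻¹ * F2 k))
      = ∑ k, gradv hinv u k x * F1 k + (u x)⁻¹ * ∑ k, gradv hinv u k x * F2 k := by
    intro F1 F2
    rw [Finset.mul_sum, ← Finset.sum_add_distrib]
    refine Finset.sum_congr rfl fun k _ => ?_
    ring
  have step : (∑ a, ∑ b, hinv x a b * ((pd b u x * (covD2 h hinv Ψ a i j x + (u x)⁻¹ * Mt h hinv u Ψ a i j x)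
          + pd a u x * (covD2 h hinv Ψ b i j x + (u x)⁻¹ * Mt h hinv u Ψ b i j x)
          - h x a b * ∑ k, gradv hinv u k x * (covD2 h hinv Ψ k i j x + (u x)⁻¹ * Mt h hinv u Ψ k i j x))
        + (pd i u x * (covD2 h hinv Ψ b a j x + (u x)⁻¹ * Mt h hinv u Ψ b a j x)
          + pd a u x * (covD2 h hinv Ψ b i j x + (u x)⁻¹ * Mt h hinv u Ψ b i j x)
          - h x a i * ∑ k, gradv hinv u k x * (covD2 h hinv Ψ b k j x + (u x)⁻¹ * Mt h hinv u Ψ b k j x))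
        + (pd j u x * (covD2 h hinv Ψ b i a x + (u x)⁻¹ * Mt h hinv u Ψ b i a x)
          + pd a u x * (covD2 h hinv Ψ b i j x + (u x)⁻¹ * Mt h hinv u Ψ b i j x)
          - h x a j * ∑ k, gradv hinv u k x * (covD2 h hinv Ψ b i k x + (u x)⁻¹ * Mt h hinv u Ψ b i k x))))
      = ∑ a, ∑ b, ((hinv x a b * (pd b u x * covD2 h hinv Ψ a i j x))
          + (u x)⁻¹ * (hinv x a b * (pd b u x * Mt h hinv u Ψ a i j x))
          + 3 * (hinv x a b * (pd a u x * covD2 h hinv Ψ b i j x))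
          + (3 * (u x)⁻¹) * (hinv x a b * (pd a u x * Mt h hinv u Ψ b i j x))
          - (hinv x a b * (h x a b * (∑ k, gradv hinv u k x * covD2 h hinv Ψ k i j x)))
          - (u x)⁻¹ * (hinv x a b * (h x a b * (∑ k, gradv hinv u k x * Mt h hinv u Ψ k i j x)))
          + pd i u x * (hinv x a b * covD2 h hinv Ψ b a j x)
          + ((u x)⁻¹ * pd i u x) * (hinv x a b * Mt h hinv u Ψ b a j x)
          - (hinv x a b * (h x a i * (∑ k, gradv hinv u k x * covD2 h hinv Ψ b k j x)))
          - (u x)⁻¹ * (hinv x a b * (h x a i * (∑ k, gradv hinv u k x * Mt h hinv u Ψ b k j x)))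
          + pd j u x * (hinv x a b * covD2 h hinv Ψ b i a x)
          + ((u x)⁻¹ * pd j u x) * (hinv x a b * Mt h hinv u Ψ b i a x)
          - (hinv x a b * (h x a j * (∑ k, gradv hinv u k x * covD2 h hinv Ψ b i k x)))
          - (u x)⁻¹ * (hinv x a b * (h x a j * (∑ k, gradv hinv u k x * Mt h hinv u Ψ b i k x)))) := by
    refine Finset.sum_congr rfl fun a _ => Finset.sum_congr rfl fun b _ => ?_
    rw [inner (fun k => covD2 h hinv Ψ k i j x) (fun k => Mt h hinv u Ψ k i j x),
      inner (fun k => covD2 h hinv Ψ b k j x) (fun k => Mt h hinv u Ψ b k j x),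
      inner (fun k => covD2 h hinv Ψ b i k x) (fun k => Mt h hinv u Ψ b i k x)]
    ring
  rw [step]
  simp only [Finset.sum_add_distrib, Finset.sum_sub_distrib, ← Finset.mul_sum]
  -- evaluate every contraction
  have swapKj : ∑ a, ∑ b, hinv x a b * covD2 h hinv Ψ b a j x
      = ∑ a, ∑ b, hinv x a b * covD2 h hinv Ψ a b j x :=
    G.swapHinv x (fun a b => covD2 h hinv Ψ b a j x)
  have antiKi : ∑ a, ∑ b, hinv x a b * covD2 h hinv Ψ b i a x
      = - ∑ a, ∑ b, hinv x a b * covD2 h hinv Ψ a b i x := by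
    rw [G.swapHinv x (fun a b => covD2 h hinv Ψ b i a x)]
    rw [← Finset.sum_neg_distrib]
    refine Finset.sum_congr rfl fun a _ => ?_
    rw [← Finset.sum_neg_distrib]
    refine Finset.sum_congr rfl fun b _ => ?_
    rw [G.covD2_antisym x a i b]
    ring
  have swapM3 : ∑ a, ∑ b, hinv x a b * Mt h hinv u Ψ b a j x
      = (4 - (Fintype.card ι : ℝ)) * Gv hinv u Ψ j x := by
    rw [G.swapHinv x (fun a b => Mt h hinv u Ψ b a j x)]
    exact G.mtE3 x j
  have swapM4 : ∑ a, ∑ b, hinv x a b * Mt h hinv u Ψ b i a x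
      = ((Fintype.card ι : ℝ) - 4) * Gv hinv u Ψ i x := by
    rw [G.swapHinv x (fun a b => Mt h hinv u Ψ b i a x)]
    exact G.mtE4 x i
  have antiBj : (∑ k, gradv hinv u k x * covD2 h hinv Ψ j i k x)
      = - ∑ k, ∑ l, hinv x k l * pd l u x * covD2 h hinv Ψ j k i x := by
    rw [← G.gForm x (fun k => covD2 h hinv Ψ j k i x), ← Finset.sum_neg_distrib]
    refine Finset.sum_congr rfl fun k _ => ?_
    rw [G.covD2_antisym x j i k]
    ring
  rw [G.cG x (fun a => covD2 h hinv Ψ a i j x),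
    G.cG x (fun a => Mt h hinv u Ψ a i j x),
    G.cG' x (fun b => covD2 h hinv Ψ b i j x),
    G.cG' x (fun b => Mt h hinv u Ψ b i j x),
    G.tC x (∑ k, gradv hinv u k x * covD2 h hinv Ψ k i j x),
    G.tC x (∑ k, gradv hinv u k x * Mt h hinv u Ψ k i j x),
    swapKj, swapM3, antiKi, swapM4,
    G.dC2 x i (fun b => ∑ k, gradv hinv u k x * covD2 h hinv Ψ b k j x),
    G.dC2 x i (fun b => ∑ k, gradv hinv u k x * Mt h hinv u Ψ b k j x),
    G.dC2 x j (fun b => ∑ k, gradv hinv u k x * covD2 h hinv Ψ b i k x),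
    G.dC2 x j (fun b => ∑ k, gradv hinv u k x * Mt h hinv u Ψ b i k x),
    G.mtE2 x i j, G.mtE5 x i j, G.mtE6 x i j, antiBj,
    G.gForm x (fun k => covD2 h hinv Ψ k i j x),
    G.gForm x (fun k => covD2 h hinv Ψ i k j x)]
  ring

end Geom
end T3
section RHSLemmas
variable {ι : Type*} [Fintype ι] [DecidableEq ι]
namespace Geom
variable {h hinv : (ι → ℝ) → ι → ι → ℝ} {u : (ι → ℝ) → ℝ} {Ψ : (ι → ℝ) → ι → ι → ℝ}
variable (G : Geom h hinv u Ψ)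
include G

theorem codiffK (x : ι → ℝ) (j : ι) :
    codiff2 h hinv Ψ j x = - ∑ a, ∑ b, hinv x a b * covD2 h hinv Ψ a b j x := by
  unfold codiff2
  rw [G.swapHinv x (fun a b => covD2 h hinv Ψ b a j x)]

theorem thmG (x : ι → ℝ) (p q : ι) :
    ∑ k, ∑ l, hinv x k l * pd l u x * pd p u x * Ψ x k q
      = pd p u x * Gv hinv u Ψ q x := by
  calc ∑ k, ∑ l, hinv x k l * pd l u x * pd p u x * Ψ x k q
      = ∑ k, pd p u x * (gradv hinv u k x * Ψ x k q) := by
        refine Finset.sum_congr rfl fun k _ => ?_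
        unfold gradv
        rw [Finset.sum_mul, Finset.mul_sum]
        refine Finset.sum_congr rfl fun l _ => by ring
    _ = pd p u x * Gv hinv u Ψ q x := by
        rw [← Finset.mul_sum]
        rfl

theorem dTwoSum (x : ι → ℝ) (i j : ι) :
    ∑ k, ∑ l, hinv x k l * pd l u x * dTwo Ψ k i j x
      = (∑ k, ∑ l, hinv x k l * pd l u x * covD2 h hinv Ψ k i j x)
        + (∑ k, ∑ l, hinv x k l * pd l u x * covD2 h hinv Ψ j k i x)
        - (∑ k, ∑ l, hinv x k l * pd l u x * covD2 h hinv Ψ i k j x) := by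
  rw [← Finset.sum_add_distrib, ← Finset.sum_sub_distrib]
  refine Finset.sum_congr rfl fun k _ => ?_
  rw [← Finset.sum_add_distrib, ← Finset.sum_sub_distrib]
  refine Finset.sum_congr rfl fun l _ => ?_
  rw [G.dTwo_eq x k i j, G.covD2_antisym x i j k]
  ring

end Geom
end RHSLemmas
/-- Conformal transformation of the rough Laplacian on
two-forms: for `h̄ = u⁻² h` (`u > 0`), `n = dim Σ`,
`Δ_{h̄} Ψ_{ij} = u² Δ_h Ψ_{ij} + 2(u Δ_h u + (2-n)|du|²_h) Ψ_{ij}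
 + (4-n)( u D^k u D_k Ψ_{ij} + D^k u D_i u Ψ_{kj} - D^k u D_j u Ψ_{ki} )
 - 2u( D_i u (δΨ)_j - D_j u (δΨ)_i ) + 2u D^k u (dΨ)_{kij}`,
all operations on the right-hand side being those of `h`. -/
theorem stmt15 {ι : Type*} [Fintype ι] [DecidableEq ι]
    (h hinv : (ι → ℝ) → ι → ι → ℝ)
    (hsym : ∀ x a b, h x a b = h x b a)
    (hinvsym : ∀ x a b, hinv x a b = hinv x b a)
    (hinverse : ∀ x a c, (∑ b, h x a b * hinv x b c) = if a = c then 1 else 0)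
    (hsm : ∀ a b, ContDiff ℝ (⊤ : ℕ∞) fun x => h x a b)
    (hinvsm : ∀ a b, ContDiff ℝ (⊤ : ℕ∞) fun x => hinv x a b)
    (u : (ι → ℝ) → ℝ) (husm : ContDiff ℝ (⊤ : ℕ∞) u) (hupos : ∀ x, 0 < u x)
    (Ψ : (ι → ℝ) → ι → ι → ℝ)
    (hΨanti : ∀ x i j, Ψ x i j = - Ψ x j i)
    (hΨsm : ∀ i j, ContDiff ℝ (⊤ : ℕ∞) fun x => Ψ x i j) :
    ∀ x i j,
      roughLap2 (fun y a b => (u y)⁻¹^2 * h y a b)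
          (fun y a b => (u y)^2 * hinv y a b) Ψ i j x
      = (u x)^2 * roughLap2 h hinv Ψ i j x
        + 2 * (u x * lap0 h hinv u x
            + (2 - (Fintype.card ι : ℝ)) *
                ∑ a, ∑ b, hinv x a b * pd a u x * pd b u x) * Ψ x i j
        + (4 - (Fintype.card ι : ℝ)) *
            (u x * ∑ k, ∑ l, hinv x k l * pd l u x * covD2 h hinv Ψ k i j x
              + (∑ k, ∑ l, hinv x k l * pd l u x * pd i u x * Ψ x k j)
              - (∑ k, ∑ l, hinv x k l * pd l u x * pd j u x * Ψ x k i))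
        - 2 * u x * (pd i u x * codiff2 h hinv Ψ j x
            - pd j u x * codiff2 h hinv Ψ i x)
        + 2 * u x * ∑ k, ∑ l, hinv x k l * pd l u x * dTwo Ψ k i j x := by
  intro x i j
  set G : Geom h hinv u Ψ := ⟨hsym, hinvsym, hinverse, hsm, hinvsm, husm, hupos, hΨanti, hΨsm⟩
    with hG
  have hne : u x ≠ 0 := (hupos x).ne'
  -- Step 1: expand the conformal rough Laplacian
  have main : roughLap2 (fun y a b => (u y)⁻¹ ^ 2 * h y a b)
        (fun y a b => (u y) ^ 2 * hinv y a b) Ψ i j x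
      = (u x) ^ 2 * (∑ a, ∑ b, hinv x a b * covDT3 h hinv
            (fun y b' i' j' => covD2 h hinv Ψ b' i' j' y) a b i j x)
        + (u x) ^ 2 * (∑ a, ∑ b, hinv x a b * covDT3 h hinv
            (fun y b' i' j' => (u y)⁻¹ * Mt h hinv u Ψ b' i' j' y) a b i j x)
        + ((u x) ^ 2 * (u x)⁻¹) * (∑ a, ∑ b, hinv x a b *
            ((pd b u x * (covD2 h hinv Ψ a i j x + (u x)⁻¹ * Mt h hinv u Ψ a i j x)
              + pd a u x * (covD2 h hinv Ψ b i j x + (u x)⁻¹ * Mt h hinv u Ψ b i j x)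
              - h x a b * ∑ k, gradv hinv u k x *
                  (covD2 h hinv Ψ k i j x + (u x)⁻¹ * Mt h hinv u Ψ k i j x))
            + (pd i u x * (covD2 h hinv Ψ b a j x + (u x)⁻¹ * Mt h hinv u Ψ b a j x)
              + pd a u x * (covD2 h hinv Ψ b i j x + (u x)⁻¹ * Mt h hinv u Ψ b i j x)
              - h x a i * ∑ k, gradv hinv u k x *
                  (covD2 h hinv Ψ b k j x + (u x)⁻¹ * Mt h hinv u Ψ b k j x))
            + (pd j u x * (covD2 h hinv Ψ b i a x + (u x)⁻¹ * Mt h hinv u Ψ b i a x)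
              + pd a u x * (covD2 h hinv Ψ b i j x + (u x)⁻¹ * Mt h hinv u Ψ b i j x)
              - h x a j * ∑ k, gradv hinv u k x *
                  (covD2 h hinv Ψ b i k x + (u x)⁻¹ * Mt h hinv u Ψ b i k x)))) := by
    simp only [roughLap2]
    have per : ∀ a b : ι, (u x) ^ 2 * hinv x a b * covDT3
          (fun y a b => (u y)⁻¹ ^ 2 * h y a b) (fun y a b => (u y) ^ 2 * hinv y a b)
          (fun y b' i' j' => covD2 (fun y a b => (u y)⁻¹ ^ 2 * h y a b)
            (fun y a b => (u y) ^ 2 * hinv y a b) Ψ b' i' j' y) a b i j x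
        = (u x) ^ 2 * (hinv x a b * covDT3 h hinv
            (fun y b' i' j' => covD2 h hinv Ψ b' i' j' y) a b i j x)
          + (u x) ^ 2 * (hinv x a b * covDT3 h hinv
            (fun y b' i' j' => (u y)⁻¹ * Mt h hinv u Ψ b' i' j' y) a b i j x)
          + ((u x) ^ 2 * (u x)⁻¹) * (hinv x a b *
            ((pd b u x * (covD2 h hinv Ψ a i j x + (u x)⁻¹ * Mt h hinv u Ψ a i j x)
              + pd a u x * (covD2 h hinv Ψ b i j x + (u x)⁻¹ * Mt h hinv u Ψ b i j x)
              - h x a b * ∑ k, gradv hinv u k x *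
                  (covD2 h hinv Ψ k i j x + (u x)⁻¹ * Mt h hinv u Ψ k i j x))
            + (pd i u x * (covD2 h hinv Ψ b a j x + (u x)⁻¹ * Mt h hinv u Ψ b a j x)
              + pd a u x * (covD2 h hinv Ψ b i j x + (u x)⁻¹ * Mt h hinv u Ψ b i j x)
              - h x a i * ∑ k, gradv hinv u k x *
                  (covD2 h hinv Ψ b k j x + (u x)⁻¹ * Mt h hinv u Ψ b k j x))
            + (pd j u x * (covD2 h hinv Ψ b i a x + (u x)⁻¹ * Mt h hinv u Ψ b i a x)
              + pd a u x * (covD2 h hinv Ψ b i j x + (u x)⁻¹ * Mt h hinv u Ψ b i j x)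
              - h x a j * ∑ k, gradv hinv u k x *
                  (covD2 h hinv Ψ b i k x + (u x)⁻¹ * Mt h hinv u Ψ b i k x)))) := by
      intro a b
      rw [G.covDT3_conf (fun y b' i' j' => covD2 (fun y a b => (u y)⁻¹ ^ 2 * h y a b)
            (fun y a b => (u y) ^ 2 * hinv y a b) Ψ b' i' j' y) x a b i j,
        G.covDT3_split x a b i j]
      simp only [G.covD2_conf]
      ring
    calc ∑ a, ∑ b, (u x) ^ 2 * hinv x a b * covDT3
          (fun y a b => (u y)⁻¹ ^ 2 * h y a b) (fun y a b => (u y) ^ 2 * hinv y a b)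
          (fun y b' i' j' => covD2 (fun y a b => (u y)⁻¹ ^ 2 * h y a b)
            (fun y a b => (u y) ^ 2 * hinv y a b) Ψ b' i' j' y) a b i j x
        = ∑ a, ∑ b, ((u x) ^ 2 * (hinv x a b * covDT3 h hinv
            (fun y b' i' j' => covD2 h hinv Ψ b' i' j' y) a b i j x)
          + (u x) ^ 2 * (hinv x a b * covDT3 h hinv
            (fun y b' i' j' => (u y)⁻¹ * Mt h hinv u Ψ b' i' j' y) a b i j x)
          + ((u x) ^ 2 * (u x)⁻¹) * (hinv x a b *
            ((pd b u x * (covD2 h hinv Ψ a i j x + (u x)⁻¹ * Mt h hinv u Ψ a i j x)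
              + pd a u x * (covD2 h hinv Ψ b i j x + (u x)⁻¹ * Mt h hinv u Ψ b i j x)
              - h x a b * ∑ k, gradv hinv u k x *
                  (covD2 h hinv Ψ k i j x + (u x)⁻¹ * Mt h hinv u Ψ k i j x))
            + (pd i u x * (covD2 h hinv Ψ b a j x + (u x)⁻¹ * Mt h hinv u Ψ b a j x)
              + pd a u x * (covD2 h hinv Ψ b i j x + (u x)⁻¹ * Mt h hinv u Ψ b i j x)
              - h x a i * ∑ k, gradv hinv u k x *
                  (covD2 h hinv Ψ b k j x + (u x)⁻¹ * Mt h hinv u Ψ b k j x))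
            + (pd j u x * (covD2 h hinv Ψ b i a x + (u x)⁻¹ * Mt h hinv u Ψ b i a x)
              + pd a u x * (covD2 h hinv Ψ b i j x + (u x)⁻¹ * Mt h hinv u Ψ b i j x)
              - h x a j * ∑ k, gradv hinv u k x *
                  (covD2 h hinv Ψ b i k x + (u x)⁻¹ * Mt h hinv u Ψ b i k x))))) :=
          Finset.sum_congr rfl fun a _ => Finset.sum_congr rfl fun b _ => per a b
      _ = _ := by
          simp only [Finset.sum_add_distrib, ← Finset.mul_sum]
  rw [main, G.T2eval x i j, G.T3eval x i j]
  -- Step 2: rewrite the right-hand side pieces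
  rw [show roughLap2 h hinv Ψ i j x = ∑ a, ∑ b, hinv x a b * covDT3 h hinv
      (fun y b' i' j' => covD2 h hinv Ψ b' i' j' y) a b i j x from rfl,
    G.codiffK x i, G.codiffK x j, G.dTwoSum x i j, G.thmG x i j, G.thmG x j i]
  field_simp
  ring


end
end
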